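/- arXiv:1108.0572 — 4 statements merged into one kernel-verified Lean document; each statement's English description precedes it below -/
import Mathlib

section
/- Let P be a finite graded poset with 0̂ and 1̂, let x cover y in P−{0̂,1̂}, and let x', y' be the two new elements added in forming the unzipped poset U(P;x,y). Then in U(P;x,y) the triple (x', y', y) satisfies the zipping hypotheses, and Z(U(P;x,y); x', y', y) = P. -/
open scoped Classical

noncomputable section

/-! ### Finite abstract simplicial complexes and simplicial (reduced) homology -/

variable {V : Type} [Fintype V] [DecidableEq V]

/-- `Δ` is an abstract simplicial complex (with the empty face). -/
def IsComplex (Δ : Finset (Finset V)) : Prop :=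
  ∅ ∈ Δ ∧ ∀ F ∈ Δ, ∀ G ⊆ F, G ∈ Δ

/-- The link of a face `F` in `Δ`. -/
def linkOf (Δ : Finset (Finset V)) (F : Finset V) : Finset (Finset V) :=
  Finset.univ.filter fun G => G ∩ F = ∅ ∧ G ∪ F ∈ Δ

/-- The module of (augmented) simplicial `k`-chains: formal `ℤ`-combinations of
subsets of `V` of cardinality `k` (a set of cardinality `k` is a face of dimension `k-1`). -/
abbrev SChain (V : Type) [Fintype V] (k : ℕ) : Type :=
  ({F : Finset V // F.card = k}) →₀ ℤ

/-- The simplicial boundary map, from `(k+1)`-chains to `k`-chains, with signs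
determined by a linear order on the vertices. -/
def sBoundary (V : Type) [Fintype V] [DecidableEq V] [LinearOrder V] (k : ℕ) :
    SChain V (k + 1) →ₗ[ℤ] SChain V k :=
  Finsupp.lsum ℤ fun F => LinearMap.toSpanSingleton ℤ _
    (∑ x ∈ F.1.attach,
      ((-1 : ℤ) ^ (F.1.filter (fun y => y < x.1)).card) •
        Finsupp.single
          (⟨F.1.erase x.1, by simp [Finset.card_erase_of_mem x.2, F.2]⟩ :
            {F : Finset V // F.card = k}) 1)

/-- The chains supported on the faces of `Δ`. -/
def chainsIn (Δ : Finset (Finset V)) (k : ℕ) : Submodule ℤ (SChain V k) :=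
  Finsupp.supported ℤ ℤ {F : {F : Finset V // F.card = k} | F.1 ∈ Δ}

/-- Cycles of `Δ` in cardinality-index `k` (dimension `k-1`). -/
def sCycles [LinearOrder V] (Δ : Finset (Finset V)) : (k : ℕ) → Submodule ℤ (SChain V k)
  | 0 => chainsIn Δ 0
  | (k + 1) => chainsIn Δ (k + 1) ⊓ LinearMap.ker (sBoundary V k)

/-- Boundaries of `Δ` in cardinality-index `k`. -/
def sBdries [LinearOrder V] (Δ : Finset (Finset V)) (k : ℕ) : Submodule ℤ (SChain V k) :=
  Submodule.map (sBoundary V k) (chainsIn Δ (k + 1))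

/-- The reduced simplicial homology of `Δ` in dimension `k-1` (cardinality-index `k`). -/
abbrev redHomology [LinearOrder V] (Δ : Finset (Finset V)) (k : ℕ) :=
  (sCycles Δ k) ⧸ (Submodule.comap (sCycles Δ k).subtype (sBdries Δ k))

/-- `Δ` has the reduced integral homology of a sphere of dimension `m`
(`m = -1` is allowed, for the empty complex `{∅}`). -/
def hasSphereHomology [LinearOrder V] (Δ : Finset (Finset V)) (m : ℤ) : Prop :=
  ∀ k : ℕ, if (k : ℤ) = m + 1 then Nonempty ((redHomology Δ k) ≃ₗ[ℤ] ℤ)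
    else Subsingleton (redHomology Δ k)

/-- `Δ` is a homology `m`-sphere: an `m`-dimensional simplicial complex such that the link
of every face `F` (including the empty face) has the reduced integral homology of a sphere
of dimension `m - |F|`.  (Relative to a linear order on `V`, used for orientation signs;
the notion is independent of this choice.) -/
def IsHomologySphereL [LinearOrder V] (Δ : Finset (Finset V)) (m : ℤ) : Prop :=
  IsComplex Δ ∧ (∀ F ∈ Δ, (F.card : ℤ) ≤ m + 1) ∧ (∃ F ∈ Δ, (F.card : ℤ) = m + 1) ∧
    ∀ F ∈ Δ, hasSphereHomology (linkOf Δ F) (m - F.card)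

/-- Some linear order on a finite type. -/
def someLinearOrder (V : Type) [Fintype V] : LinearOrder V :=
  letI := Classical.decEq V
  LinearOrder.lift' (Fintype.equivFin V) (Fintype.equivFin V).injective

/-- `Δ` is a homology sphere of dimension `m`. -/
def IsHomologySphere (Δ : Finset (Finset V)) (m : ℤ) : Prop :=
  letI := someLinearOrder V
  IsHomologySphereL Δ m

/-- `Δ` is flag: every minimal non-face has at most two vertices. -/
def IsFlagComplex (Δ : Finset (Finset V)) : Prop :=
  ∀ F : Finset V, F ∉ Δ → (∀ G ⊂ F, G ∈ Δ) → F.card ≤ 2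

/-- The (stellar) edge subdivision of `Δ` with respect to the edge `{i, j}`,
with new vertex `v`. -/
def edgeSubdiv (Δ : Finset (Finset V)) (i j v : V) : Finset (Finset V) :=
  Δ.filter (fun F => ¬ ({i, j} : Finset V) ⊆ F) ∪
    (linkOf Δ {i, j}).image (fun F => insert v F) ∪
    (linkOf Δ {i, j}).image (fun F => insert i (insert v F)) ∪
    (linkOf Δ {i, j}).image (fun F => insert j (insert v F))

/-- The edge contraction of `i` to `j` in `Δ`. -/
def edgeContract (Δ : Finset (Finset V)) (i j : V) : Finset (Finset V) :=
  Δ.filter (fun F => i ∉ F) ∪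
    (Δ.filter (fun F => i ∈ F)).image fun F => insert j (F.erase i)

/-! ### Finite graded posets -/

/-- A finite graded poset with `⊥` and `⊤`: a finite bounded poset together with a rank
function which is `0` at `⊥` and increases by exactly one along cover relations. -/
structure FinGradedPoset where
  carrier : Type
  [deq : DecidableEq carrier]
  [fin : Fintype carrier]
  [po : PartialOrder carrier]
  [bo : BoundedOrder carrier]
  rk : carrier → ℕ
  rk_bot : rk ⊥ = 0
  rk_covBy : ∀ a b : carrier, a ⋖ b → rk b = rk a + 1

attribute [instance] FinGradedPoset.deq FinGradedPoset.fin FinGradedPoset.po FinGradedPoset.bo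

/-- The rank of a graded poset (so a poset of rank `n+1` has `rank P = n + 1`). -/
def FinGradedPoset.rank (P : FinGradedPoset) : ℕ := P.rk ⊤

/-- The order complex of `P`: the simplicial complex of chains of `P − {⊥, ⊤}`. -/
def orderComplex (P : FinGradedPoset) : Finset (Finset P.carrier) :=
  Finset.univ.filter fun F =>
    IsChain (· ≤ ·) (↑F : Set P.carrier) ∧ (⊥ : P.carrier) ∉ F ∧ (⊤ : P.carrier) ∉ F

/-- A graded poset is Gorenstein* if its order complex is a homology sphere
of dimension `rank − 2`. -/
def IsGorenstein (P : FinGradedPoset) : Prop :=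
  IsHomologySphere (orderComplex P) ((P.rank : ℤ) - 2)

/-! ### Flag `f`- and `h`-vectors, and the cd-index -/

/-- The flag `f`-vector: `flagF P S` is the number of chains of `P − {⊥, ⊤}` whose
set of ranks is `S`. -/
def flagF (P : FinGradedPoset) (S : Finset ℕ) : ℕ :=
  ((orderComplex P).filter fun F => F.image P.rk = S).card

/-- The flag `h`-vector. -/
def flagH (P : FinGradedPoset) (S : Finset ℕ) : ℤ :=
  ∑ T ∈ S.powerset, (-1 : ℤ) ^ (S.card - T.card) * (flagF P T : ℤ)

/-- The `ab`-monomial `u_S = u_1 ⋯ u_n` with `u_i = b` (encoded `true`) if `i ∈ S` and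
`u_i = a` (encoded `false`) otherwise, in the free `ℤ`-algebra on `{a, b}`. -/
def uWord (n : ℕ) (S : Finset ℕ) : FreeAlgebra ℤ Bool :=
  ((List.range n).map fun i =>
    if i + 1 ∈ S then FreeAlgebra.ι ℤ true else FreeAlgebra.ι ℤ false).prod

/-- The polynomial `Ψ_P(a,b) = Σ_S h_S(P) u_S`, an element of the free `ℤ`-algebra on the
noncommuting variables `a` (encoded `false`) and `b` (encoded `true`). -/
def PsiAB (P : FinGradedPoset) : FreeAlgebra ℤ Bool :=
  ∑ S ∈ (Finset.Icc 1 (P.rank - 1)).powerset, flagH P S • uWord (P.rank - 1) S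

/-- Substitution `c ↦ a + b`, `d ↦ ab + ba`, from cd-polynomials (free `ℤ`-algebra on
`{c, d}`, `c` encoded `false` and `d` encoded `true`) to ab-polynomials. -/
def cdToAB : FreeAlgebra ℤ Bool →ₐ[ℤ] FreeAlgebra ℤ Bool :=
  FreeAlgebra.lift ℤ fun t =>
    if t then
      FreeAlgebra.ι ℤ false * FreeAlgebra.ι ℤ true +
        FreeAlgebra.ι ℤ true * FreeAlgebra.ι ℤ false
    else FreeAlgebra.ι ℤ false + FreeAlgebra.ι ℤ true

/-- `Φ` is the cd-index of `P`: substituting `c = a + b`, `d = ab + ba` into `Φ`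
yields `Ψ_P(a,b)`. -/
def IsCdIndex (P : FinGradedPoset) (Φ : FreeAlgebra ℤ Bool) : Prop :=
  cdToAB Φ = PsiAB P

/-- The variable `c` of cd-polynomials. -/
def Cv : FreeAlgebra ℤ Bool := FreeAlgebra.ι ℤ false
/-- The variable `d` of cd-polynomials. -/
def Dv : FreeAlgebra ℤ Bool := FreeAlgebra.ι ℤ true

/-- The cd-polynomial `c⁴ + α₁ dc² + α₂ cdc + α₃ c²d + α₁₃ d²`. -/
def cdPoly5 (a1 a2 a3 a13 : ℕ) : FreeAlgebra ℤ Bool :=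
  Cv ^ 4 + (a1 : ℤ) • (Dv * Cv ^ 2) + (a2 : ℤ) • (Cv * Dv * Cv) +
    (a3 : ℤ) • (Cv ^ 2 * Dv) + (a13 : ℤ) • (Dv * Dv)

/-- Substitution `c = 1` (and `d = X`) into a cd-polynomial; the coefficients of the
resulting polynomial form the `d`-vector. -/
def evalC1 : FreeAlgebra ℤ Bool →ₐ[ℤ] Polynomial ℤ :=
  FreeAlgebra.lift ℤ fun t => if t then Polynomial.X else 1

/-! ### Zipping and unzipping -/

/-- The zipping hypotheses for `x, y, z ∈ P − {⊥, ⊤}`: (i) `x` covers exactly `y` and `z`,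
(ii) `x` is the unique minimal upper bound of `y` and `z`, (iii) `y` and `z` cover exactly
the same elements. -/
def ZipHyp (P : FinGradedPoset) (x y z : P.carrier) : Prop :=
  x ≠ ⊥ ∧ x ≠ ⊤ ∧ y ≠ ⊥ ∧ y ≠ ⊤ ∧ z ≠ ⊥ ∧ z ≠ ⊤ ∧ y ≠ z ∧
    (∀ w : P.carrier, w ⋖ x ↔ (w = y ∨ w = z)) ∧
    (y ≤ x ∧ z ≤ x ∧ ∀ w : P.carrier, y ≤ w → z ≤ w → x ≤ w) ∧
    (∀ w : P.carrier, w ⋖ y ↔ w ⋖ z)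

/-- `Q` is (a copy, via the bijection `e`, of) the zipped poset `Z(P; x, y, z)`:
the underlying set is `P − {x, y}`, the order is the one of `P` together with the
added relations `z < w` for all `w > y`, and the rank function is inherited from `P`. -/
def IsZipOf (P : FinGradedPoset) (x y z : P.carrier) (Q : FinGradedPoset)
    (e : Q.carrier ≃ {w : P.carrier // w ≠ x ∧ w ≠ y}) : Prop :=
  (∀ a b : Q.carrier, a ≤ b ↔ ((e a).1 ≤ (e b).1 ∨ ((e a).1 = z ∧ y < (e b).1))) ∧
    (∀ a : Q.carrier, Q.rk a = P.rk (e a).1)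

/-- `Q` is (a copy of) the unzipped poset `U(P; x, y)`, where `x` covers `y`:
`e` embeds `P` into `Q`, the two elements of `Q` not coming from `P` are
`x'` and `y'`, ranks are inherited (with `rk x' = rk x`, `rk y' = rk y`), the cover
relations of `Q` are exactly those of `P` except `y ⋖ x`, together with
`x' ⋖ w` for all covers `x ⋖ w`, `w ⋖ y'` for all covers `w ⋖ y`, and
`y' ⋖ x'`, `y ⋖ x'`, `y' ⋖ x`; the order of `Q` is generated by its cover relations. -/
def IsUnzipOf (P : FinGradedPoset) (x y : P.carrier) (Q : FinGradedPoset)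
    (e : P.carrier ↪ Q.carrier) (x' y' : Q.carrier) : Prop :=
  x' ≠ y' ∧ (∀ a : P.carrier, e a ≠ x') ∧ (∀ a : P.carrier, e a ≠ y') ∧
    (∀ b : Q.carrier, b = x' ∨ b = y' ∨ ∃ a : P.carrier, b = e a) ∧
    (∀ a : P.carrier, Q.rk (e a) = P.rk a) ∧ Q.rk x' = P.rk x ∧ Q.rk y' = P.rk y ∧
    (∀ a b : P.carrier, e a ⋖ e b ↔ (a ⋖ b ∧ ¬(a = y ∧ b = x))) ∧
    (∀ b : P.carrier, x' ⋖ e b ↔ x ⋖ b) ∧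
    (∀ a : P.carrier, e a ⋖ x' ↔ a = y) ∧
    (∀ a : P.carrier, e a ⋖ y' ↔ a ⋖ y) ∧
    (∀ b : P.carrier, y' ⋖ e b ↔ b = x) ∧
    y' ⋖ x' ∧ ¬ (x' ⋖ y') ∧
    (∀ u v : Q.carrier, u ≤ v ↔ Relation.ReflTransGen (· ⋖ ·) u v)

/-! ### Joins, intervals, and cycles -/

/-- `R` is (a copy of) the join `P * Q`: the disjoint union of `P − {⊤}` and `Q − {⊥}`,
where every element coming from `P` lies below every element coming from `Q`,
with the appropriate rank function. -/
def IsJoinOf (P Q R : FinGradedPoset) : Prop :=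
  ∃ (f : {p : P.carrier // p ≠ ⊤} → R.carrier) (g : {q : Q.carrier // q ≠ ⊥} → R.carrier),
    Function.Injective f ∧ Function.Injective g ∧ (∀ p q, f p ≠ g q) ∧
    (∀ r : R.carrier, (∃ p, r = f p) ∨ (∃ q, r = g q)) ∧
    (∀ p p', f p ≤ f p' ↔ p.1 ≤ p'.1) ∧
    (∀ q q', g q ≤ g q' ↔ q.1 ≤ q'.1) ∧
    (∀ p q, f p ≤ g q) ∧ (∀ p q, ¬ g q ≤ f p) ∧
    (∀ p, R.rk (f p) = P.rk p.1) ∧ (∀ q, R.rk (g q) = P.rank + Q.rk q.1 - 1)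

/-- `P` is (a copy of) the rank-3 graded poset `C_k` obtained by adjoining `⊥` and `⊤`
to the face poset of a cycle of length `k`: its atoms are `k` vertices `v 0, …, v (k-1)`,
its coatoms are `k` edges `e 0, …, e (k-1)`, and the vertices below the edge `e j` are
exactly `v j` and `v ((j+1) % k)`. -/
def IsCyclePoset (k : ℕ) (P : FinGradedPoset) : Prop :=
  P.rank = 3 ∧
  ∃ v e : ℕ → P.carrier,
    (∀ i < k, ∀ j < k, v i = v j → i = j) ∧
    (∀ i < k, ∀ j < k, e i = e j → i = j) ∧
    (∀ i < k, ∀ j < k, v i ≠ e j) ∧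
    (∀ i < k, P.rk (v i) = 1) ∧ (∀ i < k, P.rk (e i) = 2) ∧
    (∀ p : P.carrier, p = ⊥ ∨ p = ⊤ ∨ (∃ i < k, p = v i) ∨ (∃ i < k, p = e i)) ∧
    (∀ i < k, ∀ j < k, (v i < e j ↔ (i = j ∨ i = (j + 1) % k))) ∧
    (∀ i < k, ∀ j < k, ¬ (e i ≤ v j)) ∧
    (∀ i < k, ∀ j < k, (v i ≤ v j ↔ i = j)) ∧
    (∀ i < k, ∀ j < k, (e i ≤ e j ↔ i = j))

lemma FinGradedPoset.exists_covBy_le (P : FinGradedPoset) {a b : P.carrier} (h : a < b) :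
    ∃ c, a ⋖ c ∧ c ≤ b := by
  letI : LocallyFiniteOrder P.carrier := Fintype.toLocallyFiniteOrder
  exact exists_covBy_le_of_lt h

lemma FinGradedPoset.rk_lt_of_lt (P : FinGradedPoset) :
    ∀ a b : P.carrier, a < b → P.rk a < P.rk b := by
  have wf : WellFounded (fun x y : P.carrier => y < x) := wellFounded_gt
  intro a
  refine WellFounded.induction wf (C := fun x => ∀ b, x < b → P.rk x < P.rk b) a ?_
  intro x ih b hxb
  obtain ⟨c, hxc, hcb⟩ := P.exists_covBy_le hxb
  have h1 := P.rk_covBy x c hxc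
  rcases eq_or_lt_of_le hcb with rfl | hlt
  · omega
  · have h2 := ih c hxc.lt b hlt
    omega

lemma FinGradedPoset.rk_le_of_le (P : FinGradedPoset) {a b : P.carrier} (h : a ≤ b) :
    P.rk a ≤ P.rk b := by
  rcases eq_or_lt_of_le h with rfl | hlt
  · exact le_rfl
  · exact (P.rk_lt_of_lt a b hlt).le

/-- The closed interval `[a, b]` of a graded poset, as a graded poset with
minimal element `a` and maximal element `b`. -/
def intervalPoset (P : FinGradedPoset) (a b : P.carrier) (hab : a ≤ b) : FinGradedPoset where
  carrier := {w : P.carrier // a ≤ w ∧ w ≤ b}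
  deq := inferInstance
  fin := Fintype.ofFinite _
  po := inferInstance
  bo :=
    { bot := ⟨a, le_rfl, hab⟩
      top := ⟨b, hab, le_rfl⟩
      le_top := fun w => Subtype.coe_le_coe.mp w.2.2
      bot_le := fun w => Subtype.coe_le_coe.mp w.2.1 }
  rk := fun w => P.rk w.1 - P.rk a
  rk_bot := Nat.sub_self _
  rk_covBy := by
    rintro ⟨u, hu⟩ ⟨v, hv⟩ h
    have huv : u ⋖ v := by
      refine ⟨Subtype.mk_lt_mk.mp h.lt, fun m hum hmv => ?_⟩
      have ham : a ≤ m := le_trans hu.1 hum.le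
      have hmb : m ≤ b := le_trans hmv.le hv.2
      exact h.2 (show (⟨u, hu⟩ : {w : P.carrier // a ≤ w ∧ w ≤ b}) < ⟨m, ham, hmb⟩ from
        Subtype.mk_lt_mk.mpr hum) (Subtype.mk_lt_mk.mpr hmv)
    have h1 := P.rk_covBy u v huv
    have h2 : P.rk a ≤ P.rk u := P.rk_le_of_le hu.1
    simp only
    omega

/-! ### f-, h- and γ-vectors of simplicial complexes -/

/-- A finite abstract simplicial complex, bundled with its (finite) vertex type. -/
structure FinComplex where
  V : Type
  [deq : DecidableEq V]
  [fin : Fintype V]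
  faces : Finset (Finset V)

attribute [instance] FinComplex.deq FinComplex.fin

/-- `Σ_{i=0}^n f_{i-1} (X-1)^{n-i}`, where `f_{i-1}` is the number of faces of
cardinality `i`; this equals `Σ_{i=0}^n h_i X^{n-i}`. -/
def fPoly (K : FinComplex) (n : ℕ) : Polynomial ℤ :=
  ∑ i ∈ Finset.range (n + 1),
    ((K.faces.filter fun F => F.card = i).card : ℤ) • (Polynomial.X - 1) ^ (n - i)

/-- The `h`-polynomial `Σ_{i=0}^n h_i X^i` of an `(n-1)`-dimensional complex. -/
def hPoly (K : FinComplex) (n : ℕ) : Polynomial ℤ :=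
  ∑ i ∈ Finset.range (n + 1), Polynomial.C ((fPoly K n).coeff (n - i)) * Polynomial.X ^ i


/-- zipping an unzipped poset at the new elements gives back the
original poset. -/
theorem stmt_3 (P Q : FinGradedPoset) (x y : P.carrier)
    (hx1 : x ≠ ⊥) (hx2 : x ≠ ⊤) (hy1 : y ≠ ⊥) (hy2 : y ≠ ⊤) (hcov : y ⋖ x)
    (e : P.carrier ↪ Q.carrier) (x' y' : Q.carrier)
    (hU : IsUnzipOf P x y Q e x' y') :
    ZipHyp Q x' y' (e y) ∧
      ∃ f : P.carrier ≃ {w : Q.carrier // w ≠ x' ∧ w ≠ y'},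
        IsZipOf Q x' y' (e y) P f := by
  obtain ⟨hxy', hex', hey', hsurj, hrk, hrkx', hrky', hcovE, hcovXup, hcovXdn,
    hcovYdn, hcovYup, hyx', hnxy, hgen⟩ := hU
  have hyltx : y < x := hcov.lt
  have hynex : y ≠ x := hyltx.ne
  -- classification of elements below `e b`
  have class1 : ∀ (b : P.carrier) (u : Q.carrier), Relation.ReflTransGen (· ⋖ ·) u (e b) →
      (∃ a, u = e a ∧ a ≤ b) ∨ (u = y' ∧ x ≤ b) ∨ (u = x' ∧ x < b) := by
    intro b u h
    induction h using Relation.ReflTransGen.head_induction_on with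
    | refl => exact Or.inl ⟨b, rfl, le_rfl⟩
    | head hcv hrest ih =>
      rename_i u v
      rcases ih with ⟨c, rfl, hcb⟩ | ⟨rfl, hxb⟩ | ⟨rfl, hxb⟩
      · rcases hsurj u with rfl | rfl | ⟨a, rfl⟩
        · exact Or.inr (Or.inr ⟨rfl, lt_of_lt_of_le ((hcovXup c).mp hcv).lt hcb⟩)
        · have : c = x := (hcovYup c).mp hcv
          exact Or.inr (Or.inl ⟨rfl, this ▸ hcb⟩)
        · exact Or.inl ⟨a, rfl, le_trans ((hcovE a c).mp hcv).1.le hcb⟩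
      · rcases hsurj u with rfl | rfl | ⟨a, rfl⟩
        · exact absurd hcv hnxy
        · exact absurd hcv.lt (lt_irrefl _)
        · exact Or.inl ⟨a, rfl, le_trans ((hcovYdn a).mp hcv).le (le_trans hyltx.le hxb)⟩
      · rcases hsurj u with rfl | rfl | ⟨a, rfl⟩
        · exact absurd hcv.lt (lt_irrefl _)
        · exact Or.inr (Or.inl ⟨rfl, hxb.le⟩)
        · have : a = y := (hcovXdn a).mp hcv
          exact Or.inl ⟨a, rfl, this ▸ (le_trans hyltx.le hxb.le)⟩
  have le_e : ∀ a b : P.carrier, e a ≤ e b → a ≤ b := by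
    intro a b h
    rcases class1 b (e a) ((hgen _ _).mp h) with ⟨a', ha', hab⟩ | ⟨h', _⟩ | ⟨h', _⟩
    · exact (e.injective ha') ▸ hab
    · exact absurd h' (hey' a)
    · exact absurd h' (hex' a)
  have y'_le : ∀ b : P.carrier, y' ≤ e b → x ≤ b := by
    intro b h
    rcases class1 b y' ((hgen _ _).mp h) with ⟨a', ha', _⟩ | ⟨_, hxb⟩ | ⟨h', _⟩
    · exact absurd ha'.symm (hey' a')
    · exact hxb
    · exact absurd h' hxy'.symm
  have x'_le : ∀ b : P.carrier, x' ≤ e b → x < b := by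
    intro b h
    rcases class1 b x' ((hgen _ _).mp h) with ⟨a', ha', _⟩ | ⟨h', _⟩ | ⟨_, hxb⟩
    · exact absurd ha'.symm (hex' a')
    · exact absurd h' hxy'
    · exact hxb
  -- classification of elements below `y'`
  have class_y' : ∀ u : Q.carrier, Relation.ReflTransGen (· ⋖ ·) u y' →
      u = y' ∨ ∃ a, u = e a ∧ a < y := by
    intro u h
    induction h using Relation.ReflTransGen.head_induction_on with
    | refl => exact Or.inl rfl
    | head hcv hrest ih =>
      rename_i u v
      rcases ih with rfl | ⟨c, rfl, hcy⟩
      · rcases hsurj u with rfl | rfl | ⟨a, rfl⟩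
        · exact absurd hcv hnxy
        · exact absurd hcv.lt (lt_irrefl _)
        · exact Or.inr ⟨a, rfl, ((hcovYdn a).mp hcv).lt⟩
      · rcases hsurj u with rfl | rfl | ⟨a, rfl⟩
        · exact absurd (lt_trans ((hcovXup c).mp hcv).lt hcy) (asymm hyltx)
        · have : c = x := (hcovYup c).mp hcv
          exact absurd (this ▸ hcy) (asymm hyltx)
        · exact Or.inr ⟨a, rfl, lt_trans ((hcovE a c).mp hcv).1.lt hcy⟩
  -- monotone embeddings, avoiding the deleted cover relation
  have upA : ∀ a b : P.carrier, a ≤ b → ¬ a ≤ y → e a ≤ e b := by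
    have wf : WellFounded (fun u v : P.carrier => v < u) := wellFounded_gt
    intro a
    refine WellFounded.induction wf (C := fun u => ∀ b, u ≤ b → ¬ u ≤ y → e u ≤ e b) a ?_
    intro u ih b hub hunot
    rcases eq_or_lt_of_le hub with rfl | hlt
    · exact le_rfl
    · obtain ⟨c, huc, hcb⟩ := P.exists_covBy_le hlt
      have hcny : ¬ c ≤ y := fun h => hunot (le_trans huc.le h)
      have h1 : e u ⋖ e c := (hcovE u c).mpr ⟨huc, fun h => hunot (h.1 ▸ le_rfl)⟩
      exact le_trans h1.le (ih c huc.lt b hcb hcny)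
  have hnxley : ¬ x ≤ y := fun h => absurd (lt_of_lt_of_le hyltx h) (lt_irrefl _)
  have exb : ∀ b : P.carrier, x ≤ b → e x ≤ e b := fun b h => upA x b h hnxley
  have y'_le' : ∀ b : P.carrier, x ≤ b → y' ≤ e b :=
    fun b h => le_trans ((hcovYup x).mpr rfl).le (exb b h)
  have not_ey_ex : ¬ e y ≤ e x := by
    intro h
    rcases Relation.ReflTransGen.cases_head ((hgen _ _).mp h) with heq | ⟨v, hcv, hrest⟩
    · exact hynex (e.injective heq)
    · rcases hsurj v with rfl | rfl | ⟨a, rfl⟩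
      · exact absurd (x'_le x ((hgen _ _).mpr hrest)) (lt_irrefl _)
      · exact absurd ((hcovYdn y).mp hcv).lt (lt_irrefl _)
      · have h1 := (hcovE y a).mp hcv
        have h2 : a ≤ x := le_e a x ((hgen _ _).mpr hrest)
        have h3 : a ≠ x := fun hh => h1.2 ⟨rfl, hh⟩
        exact hcov.2 h1.1.lt (lt_of_le_of_ne h2 h3)
  have upC : ∀ a b : P.carrier, a < y → a ≤ b → e a ≤ e b := by
    have wf : WellFounded (fun u v : P.carrier => v < u) := wellFounded_gt
    intro a
    refine WellFounded.induction wf (C := fun u => ∀ b, u < y → u ≤ b → e u ≤ e b) a ?_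
    intro u ih b huy hub
    rcases eq_or_lt_of_le hub with rfl | hlt
    · exact le_rfl
    · obtain ⟨c, huc, hcb⟩ := P.exists_covBy_le hlt
      by_cases hcy : c = y
      · subst hcy
        rcases eq_or_lt_of_le hcb with rfl | hyb
        · exact ((hcovE u c).mpr ⟨huc, fun h => (ne_of_lt huy) h.1⟩).le
        · obtain ⟨c', hyc', hc'b⟩ := P.exists_covBy_le hyb
          by_cases hcx : c' = x
          · subst hcx
            exact le_trans ((hcovYdn u).mpr huc).le (y'_le' b hc'b)
          · have h1 : e u ⋖ e c := (hcovE u c).mpr ⟨huc, fun h => hynex h.2⟩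
            have h2 : e c ⋖ e c' := (hcovE c c').mpr ⟨hyc', fun h => hcx h.2⟩
            have h3 : e c' ≤ e b := upA c' b hc'b
              (fun h => absurd (lt_of_lt_of_le hyc'.lt h) (lt_irrefl _))
            exact le_trans h1.le (le_trans h2.le h3)
      · have h1 : e u ⋖ e c := (hcovE u c).mpr ⟨huc, fun h => (ne_of_lt huy) h.1⟩
        by_cases hcy2 : c ≤ y
        · exact le_trans h1.le (ih c huc.lt b (lt_of_le_of_ne hcy2 hcy) hcb)
        · exact le_trans h1.le (upA c b hcb hcy2)
  -- main forward direction
  have fwd : ∀ a b : P.carrier, a ≤ b → e a ≤ e b ∨ (a = y ∧ y' ≤ e b) := by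
    intro a b hab
    by_cases hay : a ≤ y
    · rcases eq_or_lt_of_le hay with rfl | haylt
      · by_cases hxb : x ≤ b
        · exact Or.inr ⟨rfl, y'_le' b hxb⟩
        · left
          rcases eq_or_lt_of_le hab with rfl | hyb
          · exact le_rfl
          · obtain ⟨c, hyc, hcb⟩ := P.exists_covBy_le hyb
            have hcx : c ≠ x := fun h => hxb (h ▸ hcb)
            have h1 : e a ⋖ e c := (hcovE a c).mpr ⟨hyc, fun h => hcx h.2⟩
            exact le_trans h1.le (upA c b hcb
              (fun h => absurd (lt_of_lt_of_le hyc.lt h) (lt_irrefl _)))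
      · exact Or.inl (upC a b haylt hab)
    · exact Or.inl (upA a b hab hay)
  -- basic positivity of ranks
  have hrkxpos : 0 < P.rk x := by
    have := P.rk_lt_of_lt ⊥ x (bot_lt_iff_ne_bot.mpr hx1)
    rwa [P.rk_bot] at this
  have hrkypos : 0 < P.rk y := by
    have := P.rk_lt_of_lt ⊥ y (bot_lt_iff_ne_bot.mpr hy1)
    rwa [P.rk_bot] at this
  -- nontriviality facts
  have hx'bot : x' ≠ ⊥ := by
    intro h; rw [h, Q.rk_bot] at hrkx'; omega
  have hy'bot : y' ≠ ⊥ := by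
    intro h; rw [h, Q.rk_bot] at hrky'; omega
  have heybot : e y ≠ ⊥ := by
    intro h
    have := hrk y
    rw [h, Q.rk_bot] at this; omega
  have hx'lt : x' < e (⊤ : P.carrier) := by
    obtain ⟨c, hxc, hcb⟩ := P.exists_covBy_le (lt_top_iff_ne_top.mpr hx2)
    have h1 : x' ⋖ e c := (hcovXup c).mpr hxc
    have h2 : e c ≤ e ⊤ := upA c ⊤ le_top
      (fun h => absurd (lt_trans hyltx (lt_of_lt_of_le hxc.lt h)) (lt_irrefl _))
    exact lt_of_lt_of_le h1.lt h2
  have hx'top : x' ≠ ⊤ := by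
    intro h
    exact absurd (lt_of_lt_of_le hx'lt (h ▸ le_top)) (lt_irrefl _)
  have hy'top : y' ≠ ⊤ := by
    intro h
    exact absurd (lt_of_lt_of_le hyx'.lt (h ▸ le_top)) (lt_irrefl _)
  have heytop : e y ≠ ⊤ := by
    intro h
    exact absurd (lt_of_lt_of_le ((hcovXdn y).mpr rfl).lt (h ▸ le_top)) (lt_irrefl _)
  -- the cover condition for x'
  have hcovcond : ∀ w : Q.carrier, w ⋖ x' ↔ (w = y' ∨ w = e y) := by
    intro w
    rcases hsurj w with rfl | rfl | ⟨a, rfl⟩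
    · constructor
      · intro h; exact absurd h.lt (lt_irrefl _)
      · rintro (h | h)
        · exact absurd h hxy'
        · exact absurd h.symm (hex' y)
    · exact iff_of_true hyx' (Or.inl rfl)
    · rw [hcovXdn]
      constructor
      · intro h; exact Or.inr (congrArg e h)
      · rintro (h | h)
        · exact absurd h (hey' a)
        · exact e.injective h
  -- minimal upper bound condition
  have hmub : ∀ w : Q.carrier, y' ≤ w → e y ≤ w → x' ≤ w := by
    intro w h1 h2
    rcases hsurj w with rfl | rfl | ⟨b, rfl⟩
    · exact le_rfl
    · rcases class_y' (e y) ((hgen _ _).mp h2) with h | ⟨a, ha, hay⟩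
      · exact absurd h (hey' y)
      · exact absurd ((e.injective ha) ▸ hay) (lt_irrefl _)
    · have hxb : x ≤ b := y'_le b h1
      have hbx : x ≠ b := by
        rintro rfl; exact not_ey_ex h2
      obtain ⟨c, hxc, hcb⟩ := P.exists_covBy_le (lt_of_le_of_ne hxb hbx)
      have hc1 : x' ⋖ e c := (hcovXup c).mpr hxc
      have hc2 : e c ≤ e b := upA c b hcb
        (fun h => absurd (lt_trans hyltx (lt_of_lt_of_le hxc.lt h)) (lt_irrefl _))
      exact le_trans hc1.le hc2
  -- condition (iii)
  have hiii : ∀ w : Q.carrier, w ⋖ y' ↔ w ⋖ e y := by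
    intro w
    rcases hsurj w with rfl | rfl | ⟨a, rfl⟩
    · constructor
      · intro h; exact absurd h hnxy
      · intro h
        exact absurd (lt_trans hyltx ((hcovXup y).mp h).lt) (lt_irrefl _)
    · constructor
      · intro h; exact absurd h.lt (lt_irrefl _)
      · intro h; exact absurd ((hcovYup y).mp h) hynex
    · rw [hcovYdn, hcovE]
      constructor
      · intro h; exact ⟨h, fun hh => hynex hh.2⟩
      · intro h; exact h.1
  refine ⟨⟨hx'bot, hx'top, hy'bot, hy'top, heybot, heytop, (hey' y).symm,
    hcovcond, ⟨hyx'.le, ((hcovXdn y).mpr rfl).le, hmub⟩, hiii⟩, ?_⟩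
  have hbij : Function.Bijective
      (fun a : P.carrier => (⟨e a, hex' a, hey' a⟩ : {w : Q.carrier // w ≠ x' ∧ w ≠ y'})) := by
    constructor
    · intro a b h
      exact e.injective (congrArg Subtype.val h)
    · rintro ⟨w, hw1, hw2⟩
      rcases hsurj w with rfl | rfl | ⟨a, rfl⟩
      · exact absurd rfl hw1
      · exact absurd rfl hw2
      · exact ⟨a, rfl⟩
  refine ⟨Equiv.ofBijective _ hbij, ?_, fun a => (hrk a).symm⟩
  intro a b
  constructor
  · intro hab
    rcases fwd a b hab with h | ⟨rfl, h⟩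
    · exact Or.inl h
    · exact Or.inr ⟨rfl, lt_of_le_of_ne h (hey' b).symm⟩
  · rintro (h | ⟨hay, h⟩)
    · exact le_e a b h
    · have : a = y := e.injective hay
      exact this ▸ (le_trans hyltx.le (y'_le b h.le))
end
end

section
/- Let P be a finite graded poset with 0̂ and 1̂ and let x,y,z ∈ P−{0̂,1̂} satisfy the zipping hypotheses. Then the order complex O(Z(P;x,y,z)) is the simplicial complex obtained from O(P) by two successive edge contractions: first contract y to x, then contract x to z. -/
open scoped Classical

noncomputable section

/-! ### Finite abstract simplicial complexes and simplicial (reduced) homology -/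

variable {V : Type} [Fintype V] [DecidableEq V]

/-- the order complex of a zipped poset is obtained from the order complex
of the original poset by two successive edge contractions (`y` to `x`, then `x` to `z`). -/
theorem stmt_4 (P Q : FinGradedPoset) (x y z : P.carrier) (hzip : ZipHyp P x y z)
    (e : Q.carrier ≃ {w : P.carrier // w ≠ x ∧ w ≠ y}) (hZ : IsZipOf P x y z Q e) :
    (orderComplex Q).image (fun F => F.image fun q => ((e q : {w : P.carrier // w ≠ x ∧ w ≠ y}) : P.carrier)) =
      edgeContract (edgeContract (orderComplex P) y x) x z := by
  classical
  obtain ⟨hx0, hx1, hy0, hy1, hz0, hz1, hyz, hcov, ⟨hyx, hzx, hjoin⟩, hcovlow⟩ := hzip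
  obtain ⟨hle, -⟩ := hZ
  set f : Q.carrier → P.carrier :=
    fun q => ((e q : {w : P.carrier // w ≠ x ∧ w ≠ y}) : P.carrier) with hf
  have hfinj : Function.Injective f := fun a b h => e.injective (Subtype.ext h)
  have hfx : ∀ q, f q ≠ x := fun q => (e q).2.1
  have hfy : ∀ q, f q ≠ y := fun q => (e q).2.2
  have hycx : y ⋖ x := (hcov y).mpr (Or.inl rfl)
  have hzcx : z ⋖ x := (hcov z).mpr (Or.inr rfl)
  have hxney : x ≠ y := hycx.lt.ne'
  have hxnez : x ≠ z := hzcx.lt.ne'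
  have hcoat : ∀ a b : P.carrier, a < b → ∃ c, a ≤ c ∧ c ⋖ b := by
    intro a b h; exact exists_le_covBy_of_lt h
  have hlty : ∀ w : P.carrier, w < y → w < z := by
    intro w hw
    obtain ⟨c, hwc, hcy⟩ := hcoat w y hw
    exact lt_of_le_of_lt hwc ((hcovlow c).mp hcy).lt
  have hltz : ∀ w : P.carrier, w < z → w < y := by
    intro w hw
    obtain ⟨c, hwc, hcy⟩ := hcoat w z hw
    exact lt_of_le_of_lt hwc ((hcovlow c).mpr hcy).lt
  have hltx : ∀ w : P.carrier, w ≠ y → w < x → w ≤ z := by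
    intro w hwy hw
    obtain ⟨c, hwc, hcx⟩ := hcoat w x hw
    rcases (hcov c).mp hcx with rfl | rfl
    · exact (hlty w (lt_of_le_of_ne hwc hwy)).le
    · exact hwc
  -- bottom and top of Q map to bottom and top of P
  have hbmem : ((⊥ : P.carrier) ≠ x ∧ (⊥ : P.carrier) ≠ y) := ⟨Ne.symm hx0, Ne.symm hy0⟩
  have htmem : ((⊤ : P.carrier) ≠ x ∧ (⊤ : P.carrier) ≠ y) := ⟨Ne.symm hx1, Ne.symm hy1⟩
  have hbQ : f ⊥ = ⊥ := by
    have h1 : e.symm ⟨⊥, hbmem⟩ ≤ (⊥ : Q.carrier) := by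
      rw [hle]; left
      rw [Equiv.apply_symm_apply]
      exact bot_le
    have h2 : e.symm ⟨⊥, hbmem⟩ = (⊥ : Q.carrier) := le_bot_iff.mp h1
    rw [← h2]; simp [hf]
  have htQ : f ⊤ = ⊤ := by
    have h1 : (⊤ : Q.carrier) ≤ e.symm ⟨⊤, htmem⟩ := by
      rw [hle]; left
      rw [Equiv.apply_symm_apply]
      exact le_top
    have h2 : e.symm ⟨⊤, htmem⟩ = (⊤ : Q.carrier) := top_le_iff.mp h1
    rw [← h2]; simp [hf]
  -- the "good" predicate
  set Good : Finset P.carrier → Prop := fun C =>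
    (∀ w ∈ C, w ≠ x) ∧ (∀ w ∈ C, w ≠ y) ∧ (⊥ : P.carrier) ∉ C ∧ (⊤ : P.carrier) ∉ C ∧
    ∀ w ∈ C, ∀ w' ∈ C, w ≠ w' →
      (w ≤ w' ∨ w' ≤ w ∨ (w = z ∧ y < w') ∨ (w' = z ∧ y < w)) with hGood
  have hmemO : ∀ (R : FinGradedPoset) (C : Finset R.carrier),
      C ∈ orderComplex R ↔ IsChain (· ≤ ·) (↑C : Set R.carrier) ∧
        (⊥ : R.carrier) ∉ C ∧ (⊤ : R.carrier) ∉ C := by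
    intro R C; simp [orderComplex]
  have hmemEC : ∀ (Δ : Finset (Finset P.carrier)) (i j : P.carrier) (C : Finset P.carrier),
      C ∈ edgeContract Δ i j ↔
        (C ∈ Δ ∧ i ∉ C) ∨ ∃ F, F ∈ Δ ∧ i ∈ F ∧ insert j (F.erase i) = C := by
    intro Δ i j C
    simp only [edgeContract, Finset.mem_union, Finset.mem_filter, Finset.mem_image]
    constructor
    · rintro (⟨h1, h2⟩ | ⟨F, ⟨h1, h2⟩, h3⟩)
      · exact Or.inl ⟨h1, h2⟩
      · exact Or.inr ⟨F, h1, h2, h3⟩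
    · rintro (⟨h1, h2⟩ | ⟨F, h1, h2, h3⟩)
      · exact Or.inl ⟨h1, h2⟩
      · exact Or.inr ⟨F, ⟨h1, h2⟩, h3⟩
  -- LHS characterization
  have hL : ∀ C : Finset P.carrier,
      (C ∈ (orderComplex Q).image (fun F => F.image f)) ↔ Good C := by
    intro C
    rw [Finset.mem_image]
    constructor
    · rintro ⟨Fq, hFq, rfl⟩
      rw [hmemO] at hFq
      obtain ⟨hch, hb, ht⟩ := hFq
      refine ⟨?_, ?_, ?_, ?_, ?_⟩
      · intro w hw
        obtain ⟨q, -, rfl⟩ := Finset.mem_image.mp hw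
        exact hfx q
      · intro w hw
        obtain ⟨q, -, rfl⟩ := Finset.mem_image.mp hw
        exact hfy q
      · intro hw
        obtain ⟨q, hq, hq2⟩ := Finset.mem_image.mp hw
        have : q = ⊥ := hfinj (hq2.trans hbQ.symm)
        exact hb (this ▸ hq)
      · intro hw
        obtain ⟨q, hq, hq2⟩ := Finset.mem_image.mp hw
        have : q = ⊤ := hfinj (hq2.trans htQ.symm)
        exact ht (this ▸ hq)
      · intro w hw w' hw' hne
        obtain ⟨q, hq, rfl⟩ := Finset.mem_image.mp hw
        obtain ⟨q', hq', rfl⟩ := Finset.mem_image.mp hw'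
        have hqq : q ≠ q' := fun h => hne (by rw [h])
        rcases hch hq hq' hqq with h | h
        · rcases (hle q q').mp h with h' | h'
          · exact Or.inl h'
          · exact Or.inr (Or.inr (Or.inl h'))
        · rcases (hle q' q).mp h with h' | h'
          · exact Or.inr (Or.inl h')
          · exact Or.inr (Or.inr (Or.inr h'))
    · rintro ⟨hgx, hgy, hgb, hgt, hgc⟩
      refine ⟨Finset.univ.filter (fun q => f q ∈ C), ?_, ?_⟩
      · rw [hmemO]
        refine ⟨?_, ?_, ?_⟩
        · intro q hq q' hq' hne
          simp only [Finset.coe_filter, Set.mem_setOf_eq] at hq hq'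
          have hfne : f q ≠ f q' := fun h => hne (hfinj h)
          rcases hgc _ hq.2 _ hq'.2 hfne with h | h | h | h
          · exact Or.inl ((hle q q').mpr (Or.inl h))
          · exact Or.inr ((hle q' q).mpr (Or.inl h))
          · exact Or.inl ((hle q q').mpr (Or.inr h))
          · exact Or.inr ((hle q' q).mpr (Or.inr h))
        · intro h
          rw [Finset.mem_filter, hbQ] at h
          exact hgb h.2
        · intro h
          rw [Finset.mem_filter, htQ] at h
          exact hgt h.2
      · ext w
        simp only [Finset.mem_image, Finset.mem_filter, Finset.mem_univ, true_and]
        constructor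
        · rintro ⟨q, hq, rfl⟩; exact hq
        · intro hw
          refine ⟨e.symm ⟨w, hgx w hw, hgy w hw⟩, ?_, ?_⟩ <;>
            simp [hf, hw]
  -- RHS characterization
  have hR : ∀ C : Finset P.carrier,
      C ∈ edgeContract (edgeContract (orderComplex P) y x) x z ↔ Good C := by
    intro C
    rw [hmemEC]
    constructor
    · rintro (⟨hC1, hxC⟩ | ⟨G, hG1, hxG, rfl⟩)
      · rw [hmemEC] at hC1
        rcases hC1 with ⟨hC, hyC⟩ | ⟨F, hF, hyF, rfl⟩
        · -- C a chain of P avoiding x, y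
          rw [hmemO] at hC
          obtain ⟨hch, hb, ht⟩ := hC
          refine ⟨fun w hw => ne_of_mem_of_not_mem hw hxC,
                  fun w hw => ne_of_mem_of_not_mem hw hyC, hb, ht, ?_⟩
          intro w hw w' hw' hne
          rcases hch hw hw' hne with h | h
          · exact Or.inl h
          · exact Or.inr (Or.inl h)
        · exact absurd (Finset.mem_insert_self x _) hxC
      · -- C = insert z (G.erase x)
        rw [hmemEC] at hG1
        rcases hG1 with ⟨hG, hyG⟩ | ⟨F, hF, hyF, rfl⟩
        · -- G is a chain of P with x ∈ G, y ∉ G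
          rw [hmemO] at hG
          obtain ⟨hch, hb, ht⟩ := hG
          refine ⟨?_, ?_, ?_, ?_, ?_⟩
          · intro w hw
            rcases Finset.mem_insert.mp hw with rfl | hw
            · exact Ne.symm hxnez
            · exact Finset.ne_of_mem_erase hw
          · intro w hw
            rcases Finset.mem_insert.mp hw with rfl | hw
            · exact Ne.symm hyz
            · exact ne_of_mem_of_not_mem (Finset.mem_of_mem_erase hw) hyG
          · intro hw
            rcases Finset.mem_insert.mp hw with h | h
            · exact hz0 h.symm
            · exact hb (Finset.mem_of_mem_erase h)
          · intro hw
            rcases Finset.mem_insert.mp hw with h | h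
            · exact hz1 h.symm
            · exact ht (Finset.mem_of_mem_erase h)
          · -- chain condition
            have key : ∀ w ∈ G.erase x, w ≠ z → (w ≤ z ∨ z ≤ w) := by
              intro w hw hwz
              have hwx : w ≠ x := Finset.ne_of_mem_erase hw
              have hwG : w ∈ G := Finset.mem_of_mem_erase hw
              rcases hch hwG hxG hwx with h | h
              · exact Or.inl (hltx w (ne_of_mem_of_not_mem hwG hyG)
                  (lt_of_le_of_ne h hwx))
              · exact Or.inr (le_trans hzcx.lt.le h)
            intro w hw w' hw' hne
            rcases Finset.mem_insert.mp hw with rfl | hw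
            · rcases Finset.mem_insert.mp hw' with rfl | hw'
              · exact absurd rfl hne
              · rcases key w' hw' (Ne.symm hne) with h | h
                · exact Or.inr (Or.inl h)
                · exact Or.inl h
            · rcases Finset.mem_insert.mp hw' with h' | hw'
              · rw [h'] at hne ⊢
                rcases key w hw hne with h | h
                · exact Or.inl h
                · exact Or.inr (Or.inl h)
              · rcases hch (Finset.mem_of_mem_erase hw)
                  (Finset.mem_of_mem_erase hw') hne with h | h
                · exact Or.inl h
                · exact Or.inr (Or.inl h)
        · -- G = insert x (F.erase y) with y ∈ F
          rw [hmemO] at hF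
          obtain ⟨hch, hb, ht⟩ := hF
          rw [Finset.erase_insert_eq_erase]
          refine ⟨?_, ?_, ?_, ?_, ?_⟩
          · intro w hw
            rcases Finset.mem_insert.mp hw with rfl | hw
            · exact Ne.symm hxnez
            · exact Finset.ne_of_mem_erase hw
          · intro w hw
            rcases Finset.mem_insert.mp hw with rfl | hw
            · exact Ne.symm hyz
            · exact Finset.ne_of_mem_erase (Finset.mem_of_mem_erase hw)
          · intro hw
            rcases Finset.mem_insert.mp hw with h | h
            · exact hz0 h.symm
            · exact hb (Finset.mem_of_mem_erase (Finset.mem_of_mem_erase h))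
          · intro hw
            rcases Finset.mem_insert.mp hw with h | h
            · exact hz1 h.symm
            · exact ht (Finset.mem_of_mem_erase (Finset.mem_of_mem_erase h))
          · have key : ∀ w ∈ (F.erase y).erase x, w ≠ z →
                (w ≤ z ∨ (y < w)) := by
              intro w hw hwz
              have hwy : w ≠ y := Finset.ne_of_mem_erase (Finset.mem_of_mem_erase hw)
              have hwF : w ∈ F := Finset.mem_of_mem_erase (Finset.mem_of_mem_erase hw)
              rcases hch hwF hyF hwy with h | h
              · exact Or.inl (hlty w (lt_of_le_of_ne h hwy)).le
              · exact Or.inr (lt_of_le_of_ne h (Ne.symm hwy))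
            intro w hw w' hw' hne
            rcases Finset.mem_insert.mp hw with rfl | hw
            · rcases Finset.mem_insert.mp hw' with rfl | hw'
              · exact absurd rfl hne
              · rcases key w' hw' (Ne.symm hne) with h | h
                · exact Or.inr (Or.inl h)
                · exact Or.inr (Or.inr (Or.inl ⟨rfl, h⟩))
            · rcases Finset.mem_insert.mp hw' with h' | hw'
              · rw [h'] at hne ⊢
                rcases key w hw hne with h | h
                · exact Or.inl h
                · exact Or.inr (Or.inr (Or.inr ⟨rfl, h⟩))
              · rcases hch (Finset.mem_of_mem_erase (Finset.mem_of_mem_erase hw))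
                  (Finset.mem_of_mem_erase (Finset.mem_of_mem_erase hw')) hne with h | h
                · exact Or.inl h
                · exact Or.inr (Or.inl h)
    · rintro ⟨hgx, hgy, hgb, hgt, hgc⟩
      by_cases hzC : z ∈ C
      · by_cases hcomp : ∀ w ∈ C, w ≠ z → (w ≤ z ∨ z ≤ w)
        · -- C is a chain of P
          left
          refine ⟨?_, fun h => hgx x h rfl⟩
          rw [hmemEC]
          left
          refine ⟨?_, fun h => hgy y h rfl⟩
          rw [hmemO]
          refine ⟨?_, hgb, hgt⟩
          intro w hw w' hw' hne
          rcases hgc w hw w' hw' hne with h | h | ⟨rfl, h⟩ | ⟨rfl, h⟩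
          · exact Or.inl h
          · exact Or.inr h
          · rcases hcomp w' hw' (Ne.symm hne) with h' | h'
            · exact Or.inr h'
            · exact Or.inl h'
          · rcases hcomp w hw hne with h' | h'
            · exact Or.inl h'
            · exact Or.inr h'
        · -- there is an element incomparable with z; use y
          push_neg at hcomp
          obtain ⟨w0, hw0C, hw0z, hw0nle, hw0nge⟩ := hcomp
          have hyw0 : y < w0 := by
            rcases hgc z hzC w0 hw0C (Ne.symm hw0z) with h | h | ⟨-, h⟩ | ⟨h, -⟩
            · exact absurd h hw0nge
            · exact absurd h hw0nle
            · exact h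
            · exact absurd h hw0z
          have key : ∀ w ∈ C, w ≠ z → (w ≤ y ∨ y ≤ w) := by
            intro w hw hwz
            rcases hgc z hzC w hw (Ne.symm hwz) with h | h | ⟨-, h⟩ | ⟨h, -⟩
            · -- z ≤ w, z ≠ w so z < w
              by_cases hww0 : w = w0
              · exact Or.inr (hww0 ▸ hyw0.le)
              · rcases hgc w hw w0 hw0C hww0 with h' | h' | ⟨h', -⟩ | ⟨h', -⟩
                · exact absurd (le_trans h h') hw0nge
                · exact Or.inr (le_trans hyw0.le h')
                · exact absurd h' hwz
                · exact absurd h' hw0z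
            · exact Or.inl (hltz w (lt_of_le_of_ne h hwz)).le
            · exact Or.inr h.le
            · exact absurd h hwz
          have hF : insert y (C.erase z) ∈ orderComplex P := by
            rw [hmemO]
            refine ⟨?_, ?_, ?_⟩
            · intro w hw w' hw' hne
              simp only [Finset.coe_insert, Set.mem_insert_iff, Finset.mem_coe] at hw hw'
              rcases hw with rfl | hw
              · rcases hw' with rfl | hw'
                · exact absurd rfl hne
                · rcases key w' (Finset.mem_of_mem_erase hw')
                    (Finset.ne_of_mem_erase hw') with h | h
                  · exact Or.inr h
                  · exact Or.inl h
              · rcases hw' with rfl | hw'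
                · rcases key w (Finset.mem_of_mem_erase hw)
                    (Finset.ne_of_mem_erase hw) with h | h
                  · exact Or.inl h
                  · exact Or.inr h
                · rcases hgc w (Finset.mem_of_mem_erase hw) w'
                    (Finset.mem_of_mem_erase hw') hne with h | h | ⟨h, -⟩ | ⟨h, -⟩
                  · exact Or.inl h
                  · exact Or.inr h
                  · exact absurd h (Finset.ne_of_mem_erase hw)
                  · exact absurd h (Finset.ne_of_mem_erase hw')
            · intro h
              rcases Finset.mem_insert.mp h with h | h
              · exact hy0 h.symm
              · exact hgb (Finset.mem_of_mem_erase h)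
            · intro h
              rcases Finset.mem_insert.mp h with h | h
              · exact hy1 h.symm
              · exact hgt (Finset.mem_of_mem_erase h)
          right
          refine ⟨insert x ((insert y (C.erase z)).erase y), ?_, Finset.mem_insert_self _ _, ?_⟩
          · rw [hmemEC]
            right
            exact ⟨insert y (C.erase z), hF, Finset.mem_insert_self _ _, rfl⟩
          · rw [Finset.erase_insert (fun h => hgy y (Finset.mem_of_mem_erase h) rfl)]
            rw [Finset.erase_insert_eq_erase]
            rw [Finset.erase_eq_of_notMem
              (fun h => hgx x (Finset.mem_of_mem_erase h) rfl)]
            exact Finset.insert_erase hzC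
      · -- z ∉ C : C is itself a chain of P
        left
        refine ⟨?_, fun h => hgx x h rfl⟩
        rw [hmemEC]
        left
        refine ⟨?_, fun h => hgy y h rfl⟩
        rw [hmemO]
        refine ⟨?_, hgb, hgt⟩
        intro w hw w' hw' hne
        rcases hgc w hw w' hw' hne with h | h | ⟨rfl, -⟩ | ⟨rfl, -⟩
        · exact Or.inl h
        · exact Or.inr h
        · exact absurd hw hzC
        · exact absurd hw' hzC
  ext C
  rw [hL C, hR C]
end
end

section
/- Let P be a finite graded poset with 0̂ and 1̂ and let x cover y in P−{0̂,1̂}, with x', y' the two new elements of U(P;x,y). Then the order complex O(U(P;x,y)) is the simplicial complex obtained from O(P) by two successive edge subdivisions: first subdivide the edge {x,y} by the new vertex x', then subdivide the edge {x,x'} by the new vertex y'. -/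
open scoped Classical

noncomputable section

/-! ### Finite abstract simplicial complexes and simplicial (reduced) homology -/

variable {V : Type} [Fintype V] [DecidableEq V]

lemma FinGradedPoset.exists_le_covBy (P : FinGradedPoset) {a b : P.carrier} (h : a < b) :
    ∃ c, a ≤ c ∧ c ⋖ b := by
  haveI : IsStronglyCoatomic P.carrier := IsStronglyCoatomic.of_wellFounded_gt wellFounded_gt
  exact exists_le_covBy_of_lt h

lemma mem_orderComplex {R : FinGradedPoset} {F : Finset R.carrier} :
    F ∈ orderComplex R ↔ IsChain (· ≤ ·) (↑F : Set R.carrier) ∧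
      (⊥ : R.carrier) ∉ F ∧ (⊤ : R.carrier) ∉ F := by
  simp [orderComplex]

lemma orderComplex_mono {R : FinGradedPoset} {F G : Finset R.carrier}
    (hF : F ∈ orderComplex R) (h : G ⊆ F) : G ∈ orderComplex R := by
  rw [mem_orderComplex] at hF ⊢
  exact ⟨hF.1.mono (Finset.coe_subset.mpr h), fun hb => hF.2.1 (h hb),
    fun ht => hF.2.2 (h ht)⟩

lemma mem_linkOf {V : Type} [Fintype V] [DecidableEq V] {Δ : Finset (Finset V)}
    {F G : Finset V} : G ∈ linkOf Δ F ↔ G ∩ F = ∅ ∧ G ∪ F ∈ Δ := by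
  simp [linkOf]

lemma mem_edgeSubdiv {V : Type} [Fintype V] [DecidableEq V] {Δ : Finset (Finset V)}
    {i j v : V} {G : Finset V} :
    G ∈ edgeSubdiv Δ i j v ↔ (G ∈ Δ ∧ ¬ ({i, j} : Finset V) ⊆ G) ∨
      ∃ F ∈ linkOf Δ {i, j},
        (G = insert v F ∨ G = insert i (insert v F) ∨ G = insert j (insert v F)) := by
  simp only [edgeSubdiv, Finset.mem_union, Finset.mem_filter, Finset.mem_image]
  constructor
  · rintro (((⟨h1, h2⟩ | ⟨F, hF, rfl⟩) | ⟨F, hF, rfl⟩) | ⟨F, hF, rfl⟩)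
    · exact Or.inl ⟨h1, h2⟩
    · exact Or.inr ⟨F, hF, Or.inl rfl⟩
    · exact Or.inr ⟨F, hF, Or.inr (Or.inl rfl)⟩
    · exact Or.inr ⟨F, hF, Or.inr (Or.inr rfl)⟩
  · rintro (⟨h1, h2⟩ | ⟨F, hF, (rfl | rfl | rfl)⟩)
    · exact Or.inl (Or.inl (Or.inl ⟨h1, h2⟩))
    · exact Or.inl (Or.inl (Or.inr ⟨F, hF, rfl⟩))
    · exact Or.inl (Or.inr ⟨F, hF, rfl⟩)
    · exact Or.inr ⟨F, hF, rfl⟩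

/-- The condition describing the link of the edge `{x, y}` in an order complex. -/
def linkCond (P : FinGradedPoset) (x y : P.carrier) (F : Finset P.carrier) : Prop :=
  x ∉ F ∧ y ∉ F ∧ F ∈ orderComplex P ∧ ∀ a ∈ F, a < y ∨ x < a

lemma insert_mem_OC (P : FinGradedPoset) {x y : P.carrier}
    (hx1 : x ≠ ⊥) (hx2 : x ≠ ⊤) (hy1 : y ≠ ⊥) (hy2 : y ≠ ⊤) (hcov : y ⋖ x)
    {F : Finset P.carrier} (hF : linkCond P x y F) :
    insert x (insert y F) ∈ orderComplex P := by
  obtain ⟨hxF, hyF, hFOC, hcmp⟩ := hF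
  rw [mem_orderComplex] at hFOC ⊢
  refine ⟨?_, ?_, ?_⟩
  · rw [Finset.coe_insert, Finset.coe_insert]
    refine (hFOC.1.insert ?_).insert ?_
    · intro b hb _
      rcases hcmp b hb with h | h
      · exact Or.inr h.le
      · exact Or.inl (hcov.lt.trans h).le
    · intro b hb _
      rcases hb with rfl | hb
      · exact Or.inr hcov.lt.le
      · rcases hcmp b hb with h | h
        · exact Or.inr (h.trans hcov.lt).le
        · exact Or.inl h.le
  · simp only [Finset.mem_insert]
    rintro (h | h | h)
    exacts [hx1 h.symm, hy1 h.symm, hFOC.2.1 h]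
  · simp only [Finset.mem_insert]
    rintro (h | h | h)
    exacts [hx2 h.symm, hy2 h.symm, hFOC.2.2 h]

lemma chain_comp (P : FinGradedPoset) {x y : P.carrier} (hcov : y ⋖ x)
    {F' : Finset P.carrier} (hch : IsChain (· ≤ ·) (↑F' : Set P.carrier))
    (hx : x ∈ F') (hy : y ∈ F') {a : P.carrier} (ha : a ∈ F')
    (hax : a ≠ x) (hay : a ≠ y) : a < y ∨ x < a := by
  rcases hch (Finset.mem_coe.mpr ha) (Finset.mem_coe.mpr hy) hay with h | h
  · exact Or.inl (lt_of_le_of_ne h hay)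
  · rcases hch (Finset.mem_coe.mpr ha) (Finset.mem_coe.mpr hx) hax with h2 | h2
    · exact absurd (lt_of_le_of_ne h2 hax) (hcov.2 (lt_of_le_of_ne h (Ne.symm hay)))
    · exact Or.inr (lt_of_le_of_ne h2 (Ne.symm hax))

lemma link_D0 (P : FinGradedPoset) {QC : Type} [Fintype QC] [DecidableEq QC]
    {x y : P.carrier}
    (hx1 : x ≠ ⊥) (hx2 : x ≠ ⊤) (hy1 : y ≠ ⊥) (hy2 : y ≠ ⊤) (hcov : y ⋖ x)
    (e : P.carrier ↪ QC) (G : Finset QC) :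
    G ∈ linkOf ((orderComplex P).image fun F => F.image e) {e x, e y} ↔
      ∃ F, linkCond P x y F ∧ G = F.image e := by
  rw [mem_linkOf]
  constructor
  · rintro ⟨hdisj, hmem⟩
    obtain ⟨F', hF', hFeq⟩ := Finset.mem_image.mp hmem
    have hxF' : x ∈ F' := by
      have h : e x ∈ F'.image e := by rw [hFeq]; exact Finset.mem_union_right _ (by simp)
      obtain ⟨a, ha, hae⟩ := Finset.mem_image.mp h
      exact (e.injective hae) ▸ ha
    have hyF' : y ∈ F' := by
      have h : e y ∈ F'.image e := by rw [hFeq]; exact Finset.mem_union_right _ (by simp)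
      obtain ⟨a, ha, hae⟩ := Finset.mem_image.mp h
      exact (e.injective hae) ▸ ha
    have hGn : ∀ g ∈ G, g ≠ e x ∧ g ≠ e y := by
      intro g hg
      constructor <;> rintro rfl
      · have h : e x ∈ G ∩ ({e x, e y} : Finset QC) :=
          Finset.mem_inter.mpr ⟨hg, by simp⟩
        rw [hdisj] at h; exact absurd h (Finset.notMem_empty _)
      · have h : e y ∈ G ∩ ({e x, e y} : Finset QC) :=
          Finset.mem_inter.mpr ⟨hg, by simp⟩
        rw [hdisj] at h; exact absurd h (Finset.notMem_empty _)
    have hchF' := (mem_orderComplex.mp hF').1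
    refine ⟨(F'.erase x).erase y, ⟨?_, ?_, ?_, ?_⟩, ?_⟩
    · simp [Finset.mem_erase]
    · simp
    · exact orderComplex_mono hF'
        ((Finset.erase_subset _ _).trans (Finset.erase_subset _ _))
    · intro a ha
      obtain ⟨hay, hax, haF⟩ : a ≠ y ∧ a ≠ x ∧ a ∈ F' := by
        simpa [Finset.mem_erase, and_assoc] using ha
      exact chain_comp P hcov hchF' hxF' hyF' haF hax hay
    · ext g
      simp only [Finset.mem_image, Finset.mem_erase]
      constructor
      · intro hg
        have h : g ∈ F'.image e := by
          have h2 : g ∈ G ∪ ({e x, e y} : Finset QC) := Finset.mem_union_left _ hg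
          rwa [← hFeq] at h2
        obtain ⟨a, ha, rfl⟩ := Finset.mem_image.mp h
        exact ⟨a, ⟨fun h' => (hGn _ hg).2 (by rw [h']),
          fun h' => (hGn _ hg).1 (by rw [h']), ha⟩, rfl⟩
      · rintro ⟨a, ⟨hay, hax, ha⟩, rfl⟩
        have h : e a ∈ G ∪ ({e x, e y} : Finset QC) := by
          rw [← hFeq]; exact Finset.mem_image_of_mem _ ha
        rcases Finset.mem_union.mp h with h | h
        · exact h
        · exfalso
          rcases Finset.mem_insert.mp h with h' | h'
          · exact hax (e.injective h')
          · exact hay (e.injective (Finset.mem_singleton.mp h'))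
  · rintro ⟨F, hF, rfl⟩
    obtain ⟨hxF, hyF, hFOC, hcmp⟩ := hF
    constructor
    · rw [Finset.eq_empty_iff_forall_notMem]
      intro g hg
      obtain ⟨hg1, hg2⟩ := Finset.mem_inter.mp hg
      obtain ⟨a, ha, rfl⟩ := Finset.mem_image.mp hg1
      rcases Finset.mem_insert.mp hg2 with h' | h'
      · exact hxF ((e.injective h') ▸ ha)
      · exact hyF ((e.injective (Finset.mem_singleton.mp h')) ▸ ha)
    · refine Finset.mem_image.mpr ⟨insert x (insert y F),
        insert_mem_OC P hx1 hx2 hy1 hy2 hcov ⟨hxF, hyF, hFOC, hcmp⟩, ?_⟩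
      rw [Finset.image_insert, Finset.image_insert]
      ext g
      simp only [Finset.mem_insert, Finset.mem_union, Finset.mem_singleton]
      tauto

lemma link_S1 (P : FinGradedPoset) {QC : Type} [Fintype QC] [DecidableEq QC]
    {x y : P.carrier}
    (hx1 : x ≠ ⊥) (hx2 : x ≠ ⊤) (hy1 : y ≠ ⊥) (hy2 : y ≠ ⊤) (hcov : y ⋖ x)
    (e : P.carrier ↪ QC) (x' : QC) (hx' : ∀ a, e a ≠ x') (G : Finset QC) :
    G ∈ linkOf (edgeSubdiv ((orderComplex P).image fun F => F.image e) (e x) (e y) x')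
        {e x, x'} ↔ ∃ F, linkCond P x y F ∧ G = F.image e := by
  have hxyne : x ≠ y := hcov.lt.ne'
  rw [mem_linkOf]
  constructor
  · rintro ⟨hdisj, hmem⟩
    have hGn : ∀ g ∈ G, g ≠ e x ∧ g ≠ x' := by
      intro g hg
      constructor
      · rintro rfl
        have h : e x ∈ G ∩ ({e x, x'} : Finset QC) :=
          Finset.mem_inter.mpr ⟨hg, by simp⟩
        rw [hdisj] at h; exact absurd h (Finset.notMem_empty _)
      · intro hgx
        have h : g ∈ G ∩ ({e x, x'} : Finset QC) :=
          Finset.mem_inter.mpr ⟨hg, by simp [hgx]⟩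
        rw [hdisj] at h; exact absurd h (Finset.notMem_empty _)
    rcases mem_edgeSubdiv.mp hmem with ⟨hD0, _⟩ | ⟨L, hL, hshape⟩
    · exfalso
      obtain ⟨F', _, hFeq⟩ := Finset.mem_image.mp hD0
      have h : x' ∈ F'.image e := by
        rw [hFeq]; exact Finset.mem_union_right _ (by simp)
      obtain ⟨a, _, hae⟩ := Finset.mem_image.mp h
      exact hx' a hae
    · obtain ⟨F, hF, rfl⟩ := (link_D0 P hx1 hx2 hy1 hy2 hcov e L).mp hL
      have hexmem : e x ∈ G ∪ ({e x, x'} : Finset QC) :=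
        Finset.mem_union_right _ (by simp)
      rcases hshape with heq | heq | heq
      · exfalso
        rw [heq] at hexmem
        rcases Finset.mem_insert.mp hexmem with h | h
        · exact hx' x h
        · obtain ⟨a, ha, hae⟩ := Finset.mem_image.mp h
          exact hF.1 ((e.injective hae) ▸ ha)
      · refine ⟨F, hF, ?_⟩
        ext g
        constructor
        · intro hg
          have h : g ∈ G ∪ ({e x, x'} : Finset QC) := Finset.mem_union_left _ hg
          rw [heq] at h
          rcases Finset.mem_insert.mp h with h' | h'
          · exact absurd h' (hGn g hg).1
          · rcases Finset.mem_insert.mp h' with h'' | h''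
            · exact absurd h'' (hGn g hg).2
            · exact h''
        · intro hg
          obtain ⟨a, ha, rfl⟩ := Finset.mem_image.mp hg
          have h : e a ∈ G ∪ ({e x, x'} : Finset QC) := by
            rw [heq]
            exact Finset.mem_insert_of_mem (Finset.mem_insert_of_mem hg)
          rcases Finset.mem_union.mp h with h' | h'
          · exact h'
          · exfalso
            rcases Finset.mem_insert.mp h' with h'' | h''
            · exact hF.1 ((e.injective h'') ▸ ha)
            · exact hx' a (Finset.mem_singleton.mp h'')
      · exfalso
        rw [heq] at hexmem
        rcases Finset.mem_insert.mp hexmem with h | h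
        · exact hxyne (e.injective h)
        · rcases Finset.mem_insert.mp h with h' | h'
          · exact hx' x h'
          · obtain ⟨a, ha, hae⟩ := Finset.mem_image.mp h'
            exact hF.1 ((e.injective hae) ▸ ha)
  · rintro ⟨F, hF, rfl⟩
    refine ⟨?_, ?_⟩
    · rw [Finset.eq_empty_iff_forall_notMem]
      intro g hg
      obtain ⟨hg1, hg2⟩ := Finset.mem_inter.mp hg
      obtain ⟨a, ha, rfl⟩ := Finset.mem_image.mp hg1
      rcases Finset.mem_insert.mp hg2 with h' | h'
      · exact hF.1 ((e.injective h') ▸ ha)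
      · exact hx' a (Finset.mem_singleton.mp h')
    · refine mem_edgeSubdiv.mpr (Or.inr ⟨F.image e,
        (link_D0 P hx1 hx2 hy1 hy2 hcov e _).mpr ⟨F, hF, rfl⟩, Or.inr (Or.inl ?_)⟩)
      ext g
      simp only [Finset.mem_union, Finset.mem_insert, Finset.mem_singleton]
      tauto

/-- Characterization of the order relation in an unzipped poset. -/
lemma unzip_le_char (P Q : FinGradedPoset) (x y : P.carrier) (hcov : y ⋖ x)
    (e : P.carrier ↪ Q.carrier) (x' y' : Q.carrier)
    (hU : IsUnzipOf P x y Q e x' y') :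
    (∀ a b : P.carrier, (e a ≤ e b ↔ a ≤ b ∧ ¬(a = y ∧ b = x))) ∧
    (∀ b, (x' ≤ e b ↔ x < b)) ∧ (∀ a, (e a ≤ x' ↔ a ≤ y)) ∧
    (∀ a, (e a ≤ y' ↔ a < y)) ∧ (∀ b, (y' ≤ e b ↔ x ≤ b)) ∧ y' ≤ x' ∧ ¬ x' ≤ y' := by
  obtain ⟨h1, h2, h3, h4, h5, h6, h7, h8, h9, h10, h11, h12, h13, h14, h15⟩ := hU
  have hyx : y < x := hcov.lt
  have hxy : ¬ x ≤ y := fun h => absurd (h.trans_lt hyx) (lt_irrefl x)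
  -- forward direction: induction on reflexive-transitive closure of covers
  have key : ∀ u v : Q.carrier, Relation.ReflTransGen (· ⋖ ·) u v →
      ((∀ a b, u = e a → v = e b → a ≤ b ∧ ¬(a = y ∧ b = x)) ∧
       (∀ b, u = x' → v = e b → x < b) ∧
       (∀ a, u = e a → v = x' → a ≤ y) ∧
       (∀ a, u = e a → v = y' → a < y) ∧
       (∀ b, u = y' → v = e b → x ≤ b) ∧
       (u = x' → v = y' → False)) := by
    intro u v huv
    induction huv using Relation.ReflTransGen.head_induction_on with
    | refl =>
      refine ⟨?_, ?_, ?_, ?_, ?_, ?_⟩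
      · rintro a b rfl hb
        obtain rfl : a = b := e.injective hb
        exact ⟨le_rfl, fun ⟨hh, hh'⟩ => hyx.ne (hh.symm.trans hh')⟩
      · rintro b rfl hb; exact absurd hb.symm (h2 b)
      · rintro a rfl hb; exact absurd hb (h2 a)
      · rintro a rfl hb; exact absurd hb (h3 a)
      · rintro b rfl hb; exact absurd hb.symm (h3 b)
      · rintro rfl hb; exact h1 hb
    | head hstep hrest ih =>
      rename_i u w
      refine ⟨?_, ?_, ?_, ?_, ?_, ?_⟩
      · rintro a b rfl hb
        rcases h4 w with rfl | rfl | ⟨c, rfl⟩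
        · obtain rfl : a = y := (h10 a).mp hstep
          have hxb : x < b := ih.2.1 b rfl hb
          exact ⟨(hyx.trans hxb).le, fun ⟨_, hh⟩ => (hxb.ne' hh).elim⟩
        · have hay : a ⋖ y := (h11 a).mp hstep
          have hxb : x ≤ b := ih.2.2.2.2.1 b rfl hb
          exact ⟨(hay.lt.trans (hyx.trans_le hxb)).le,
            fun ⟨hh, _⟩ => (hay.lt.ne hh).elim⟩
        · obtain ⟨hac, hnc⟩ := (h8 a c).mp hstep
          obtain ⟨hcb, _⟩ := ih.1 c b rfl hb
          refine ⟨hac.le.trans hcb, ?_⟩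
          rintro ⟨ha', hb'⟩
          rw [ha'] at hac
          rw [hb'] at hcb
          have hcx : c < x := lt_of_le_of_ne hcb (fun h' => hnc ⟨ha', h'⟩)
          exact hcov.2 hac.lt hcx
      · rintro b rfl hb
        rcases h4 w with rfl | rfl | ⟨c, rfl⟩
        · exact absurd hstep.lt (lt_irrefl _)
        · exact absurd hstep h14
        · have hxc : x ⋖ c := (h9 c).mp hstep
          exact hxc.lt.trans_le (ih.1 c b rfl hb).1
      · rintro a rfl hb
        rcases h4 w with rfl | rfl | ⟨c, rfl⟩
        · exact ((h10 a).mp hstep).le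
        · exact ((h11 a).mp hstep).lt.le
        · obtain ⟨hac, _⟩ := (h8 a c).mp hstep
          exact hac.lt.le.trans (ih.2.2.1 c rfl hb)
      · rintro a rfl hb
        rcases h4 w with rfl | rfl | ⟨c, rfl⟩
        · exact absurd (ih.2.2.2.2.2 rfl hb) id
        · exact ((h11 a).mp hstep).lt
        · obtain ⟨hac, _⟩ := (h8 a c).mp hstep
          exact hac.lt.trans (ih.2.2.2.1 c rfl hb)
      · rintro b rfl hb
        rcases h4 w with rfl | rfl | ⟨c, rfl⟩
        · exact (ih.2.1 b rfl hb).le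
        · exact absurd hstep.lt (lt_irrefl _)
        · obtain rfl : c = x := (h12 c).mp hstep
          exact (ih.1 c b rfl hb).1
      · rintro rfl hb
        rcases h4 w with rfl | rfl | ⟨c, rfl⟩
        · exact absurd hstep.lt (lt_irrefl _)
        · exact h14 hstep
        · have hxc : x ⋖ c := (h9 c).mp hstep
          have hcy : c < y := ih.2.2.2.1 c rfl hb
          exact absurd (hxc.lt.trans hcy) (lt_asymm hyx)
  -- converse constructions
  have build1 : ∀ n : ℕ, ∀ a b : P.carrier, a ≤ b → P.rk b - P.rk a ≤ n → ¬ x ≤ b →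
      Relation.ReflTransGen (· ⋖ ·) (e a) (e b) := by
    intro n
    induction n with
    | zero =>
      intro a b hab hn _
      rcases eq_or_lt_of_le hab with rfl | hlt
      · exact Relation.ReflTransGen.refl
      · exact absurd (P.rk_lt_of_lt a b hlt) (by omega)
    | succ n ih =>
      intro a b hab hn hxb
      rcases eq_or_lt_of_le hab with rfl | hlt
      · exact Relation.ReflTransGen.refl
      · obtain ⟨c, hac, hcb⟩ := P.exists_covBy_le hlt
        have hstep : e a ⋖ e c := (h8 a c).mpr ⟨hac, by rintro ⟨rfl, rfl⟩; exact hxb hcb⟩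
        have hrk := P.rk_covBy a c hac
        have hrk2 := P.rk_le_of_le hcb
        exact Relation.ReflTransGen.head hstep (ih c b hcb (by omega) hxb)
  have build2 : ∀ n : ℕ, ∀ a b : P.carrier, a ≤ b → P.rk b - P.rk a ≤ n → ¬ a ≤ y →
      Relation.ReflTransGen (· ⋖ ·) (e a) (e b) := by
    intro n
    induction n with
    | zero =>
      intro a b hab hn _
      rcases eq_or_lt_of_le hab with rfl | hlt
      · exact Relation.ReflTransGen.refl
      · exact absurd (P.rk_lt_of_lt a b hlt) (by omega)
    | succ n ih =>
      intro a b hab hn hay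
      rcases eq_or_lt_of_le hab with rfl | hlt
      · exact Relation.ReflTransGen.refl
      · obtain ⟨c, hac, hcb⟩ := P.exists_covBy_le hlt
        have hstep : e a ⋖ e c := (h8 a c).mpr
          ⟨hac, by rintro ⟨rfl, rfl⟩; exact hay le_rfl⟩
        have hrk := P.rk_covBy a c hac
        have hrk2 := P.rk_le_of_le hcb
        refine Relation.ReflTransGen.head hstep (ih c b hcb (by omega) ?_)
        exact fun hcy => hay (hac.lt.le.trans hcy)
  have pis : ∀ a b : P.carrier, a ≤ b → ¬ x ≤ b →
      Relation.ReflTransGen (· ⋖ ·) (e a) (e b) :=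
    fun a b hab => build1 (P.rk b) a b hab (by omega)
  have pix : ∀ a b : P.carrier, a ≤ b → ¬ a ≤ y →
      Relation.ReflTransGen (· ⋖ ·) (e a) (e b) :=
    fun a b hab => build2 (P.rk b) a b hab (by omega)
  have piv : ∀ a : P.carrier, a ≤ y → Relation.ReflTransGen (· ⋖ ·) (e a) x' :=
    fun a hay => (pis a y hay hxy).tail ((h10 y).mpr rfl)
  have pv : ∀ a : P.carrier, a < y → Relation.ReflTransGen (· ⋖ ·) (e a) y' := by
    intro a hay
    obtain ⟨w, haw, hwy⟩ := P.exists_le_covBy hay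
    exact (pis a w haw (fun hxw => hxy (hxw.trans hwy.lt.le))).tail ((h11 w).mpr hwy)
  have pvi : ∀ b : P.carrier, x ≤ b → Relation.ReflTransGen (· ⋖ ·) y' (e b) :=
    fun b hxb => Relation.ReflTransGen.head ((h12 x).mpr rfl) (pix x b hxb hxy)
  have pvii : ∀ b : P.carrier, x < b → Relation.ReflTransGen (· ⋖ ·) x' (e b) := by
    intro b hxb
    obtain ⟨c, hxc, hcb⟩ := P.exists_covBy_le hxb
    refine Relation.ReflTransGen.head ((h9 c).mpr hxc) (pix c b hcb ?_)
    exact fun hcy => hxy (hxc.lt.le.trans hcy)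
  have eab : ∀ a b : P.carrier, a ≤ b → ¬(a = y ∧ b = x) →
      Relation.ReflTransGen (· ⋖ ·) (e a) (e b) := by
    intro a b hab hne
    by_cases hxb : x ≤ b
    · by_cases hay : a ≤ y
      · rcases eq_or_lt_of_le hay with rfl | hlt
        · have hbx : x < b := lt_of_le_of_ne hxb (fun hh => hne ⟨rfl, hh.symm⟩)
          exact (piv a le_rfl).trans (pvii b hbx)
        · exact (pv a hlt).trans (pvi b hxb)
      · exact pix a b hab hay
    · exact pis a b hab hxb
  refine ⟨?_, ?_, ?_, ?_, ?_, ?_, ?_⟩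
  · intro a b
    constructor
    · intro h; exact (key _ _ ((h15 _ _).mp h)).1 a b rfl rfl
    · rintro ⟨hab, hne⟩; exact (h15 _ _).mpr (eab a b hab hne)
  · intro b
    exact ⟨fun h => (key _ _ ((h15 _ _).mp h)).2.1 b rfl rfl,
      fun h => (h15 _ _).mpr (pvii b h)⟩
  · intro a
    exact ⟨fun h => (key _ _ ((h15 _ _).mp h)).2.2.1 a rfl rfl,
      fun h => (h15 _ _).mpr (piv a h)⟩
  · intro a
    exact ⟨fun h => (key _ _ ((h15 _ _).mp h)).2.2.2.1 a rfl rfl,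
      fun h => (h15 _ _).mpr (pv a h)⟩
  · intro b
    exact ⟨fun h => (key _ _ ((h15 _ _).mp h)).2.2.2.2.1 b rfl rfl,
      fun h => (h15 _ _).mpr (pvi b h)⟩
  · exact (h15 _ _).mpr (Relation.ReflTransGen.single h13)
  · exact fun h => (key _ _ ((h15 _ _).mp h)).2.2.2.2.2 rfl rfl

/-- the order complex of an unzipped poset is obtained from the order
complex of the original poset by two successive edge subdivisions (subdivide `{x,y}`
by `x'`, then `{x,x'}` by `y'`). -/
theorem stmt_5 (P Q : FinGradedPoset) (x y : P.carrier)
    (hx1 : x ≠ ⊥) (hx2 : x ≠ ⊤) (hy1 : y ≠ ⊥) (hy2 : y ≠ ⊤) (hcov : y ⋖ x)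
    (e : P.carrier ↪ Q.carrier) (x' y' : Q.carrier)
    (hU : IsUnzipOf P x y Q e x' y') :
    orderComplex Q =
      edgeSubdiv (edgeSubdiv ((orderComplex P).image fun F => F.image e) (e x) (e y) x')
        (e x) x' y' := by
  obtain ⟨char1, char2, char3, char4, char5, char6, char7⟩ :=
    unzip_le_char P Q x y hcov e x' y' hU
  obtain ⟨hnexy', hex', hey', htri, -, -, -, -, -, -, -, -, -, -, -⟩ := hU
  have hyx : y < x := hcov.lt
  have hxyne : x ≠ y := hyx.ne'
  have hxy : ¬ x ≤ y := fun h => absurd (h.trans_lt hyx) (lt_irrefl x)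
  have hbotQ : (⊥ : Q.carrier) = e ⊥ := by
    rcases htri ⊥ with h | h | ⟨a, h⟩
    · exfalso
      have h2 : x' ≤ e y := h ▸ (bot_le : (⊥ : Q.carrier) ≤ e y)
      exact lt_asymm hyx ((char2 y).mp h2)
    · exfalso
      have h2 : y' ≤ e y := h ▸ (bot_le : (⊥ : Q.carrier) ≤ e y)
      exact hxy ((char5 y).mp h2)
    · have h2 : e a ≤ e ⊥ := h ▸ (bot_le : (⊥ : Q.carrier) ≤ e ⊥)
      rw [h, le_bot_iff.mp ((char1 a ⊥).mp h2).1]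
  have htopQ : (⊤ : Q.carrier) = e ⊤ := by
    rcases htri ⊤ with h | h | ⟨a, h⟩
    · exfalso
      have h2 : e ⊤ ≤ x' := h ▸ (le_top : e ⊤ ≤ (⊤ : Q.carrier))
      exact hy2 (top_le_iff.mp ((char3 ⊤).mp h2))
    · exfalso
      have h2 : e ⊤ ≤ y' := h ▸ (le_top : e ⊤ ≤ (⊤ : Q.carrier))
      exact not_top_lt ((char4 ⊤).mp h2)
    · have h2 : e ⊤ ≤ e a := h ▸ (le_top : e ⊤ ≤ (⊤ : Q.carrier))
      rw [h, top_le_iff.mp ((char1 ⊤ a).mp h2).1]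
  have hbx' : (⊥ : Q.carrier) ≠ x' := by rw [hbotQ]; exact hex' ⊥
  have hby' : (⊥ : Q.carrier) ≠ y' := by rw [hbotQ]; exact hey' ⊥
  have htx' : (⊤ : Q.carrier) ≠ x' := by rw [htopQ]; exact hex' ⊤
  have hty' : (⊤ : Q.carrier) ≠ y' := by rw [htopQ]; exact hey' ⊤
  have himchain : ∀ F : Finset P.carrier, F ∈ orderComplex P → ¬(x ∈ F ∧ y ∈ F) →
      IsChain (· ≤ ·) (↑(F.image e) : Set Q.carrier) := by
    intro F hF hnb g hg g' hg' hne'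
    obtain ⟨a, ha, rfl⟩ := Finset.mem_image.mp (Finset.mem_coe.mp hg)
    obtain ⟨b, hb, rfl⟩ := Finset.mem_image.mp (Finset.mem_coe.mp hg')
    have hab : a ≠ b := fun h => hne' (by rw [h])
    have hchF := (mem_orderComplex.mp hF).1
    rcases hchF (Finset.mem_coe.mpr ha) (Finset.mem_coe.mpr hb) hab with h | h
    · refine Or.inl ((char1 a b).mpr ⟨h, ?_⟩)
      rintro ⟨rfl, rfl⟩; exact hnb ⟨hb, ha⟩
    · refine Or.inr ((char1 b a).mpr ⟨h, ?_⟩)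
      rintro ⟨rfl, rfl⟩; exact hnb ⟨ha, hb⟩
  have hnotbt : ∀ S : Finset Q.carrier,
      (∀ g ∈ S, g = x' ∨ g = y' ∨ ∃ a, a ≠ ⊥ ∧ a ≠ ⊤ ∧ g = e a) →
      (⊥ : Q.carrier) ∉ S ∧ (⊤ : Q.carrier) ∉ S := by
    intro S hS
    constructor
    · intro hb
      rcases hS _ hb with h | h | ⟨a, ha1, _, h⟩
      · exact hbx' h
      · exact hby' h
      · rw [hbotQ] at h; exact ha1 (e.injective h.symm)
    · intro ht
      rcases hS _ ht with h | h | ⟨a, _, ha2, h⟩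
      · exact htx' h
      · exact hty' h
      · rw [htopQ] at h; exact ha2 (e.injective h.symm)
  have himgbt : ∀ F : Finset P.carrier, F ∈ orderComplex P → ∀ g ∈ F.image e,
      ∃ a, a ≠ ⊥ ∧ a ≠ ⊤ ∧ g = e a := by
    intro F hF g hg
    obtain ⟨a, ha, rfl⟩ := Finset.mem_image.mp hg
    have h2 := (mem_orderComplex.mp hF).2
    exact ⟨a, fun h => h2.1 (h ▸ ha), fun h => h2.2 (h ▸ ha), rfl⟩
  ext G
  rw [mem_edgeSubdiv]
  constructor
  · -- orderComplex Q ⊆ double subdivision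
    intro hG
    obtain ⟨hchG, hbG, htG⟩ := mem_orderComplex.mp hG
    rw [hbotQ] at hbG
    rw [htopQ] at htG
    set F : Finset P.carrier := Finset.univ.filter (fun a => e a ∈ G) with hFdef
    have hFmem : ∀ a : P.carrier, a ∈ F ↔ e a ∈ G := by intro a; simp [hFdef]
    have hcompat : ∀ g ∈ G, ∀ g' ∈ G, g ≠ g' → g ≤ g' ∨ g' ≤ g :=
      fun g hg g' hg' h => hchG (Finset.mem_coe.mpr hg) (Finset.mem_coe.mpr hg') h
    have hFOC : F ∈ orderComplex P := by
      rw [mem_orderComplex]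
      refine ⟨?_, fun h => hbG ((hFmem ⊥).mp h), fun h => htG ((hFmem ⊤).mp h)⟩
      intro a ha b hb hab
      rcases hcompat _ ((hFmem a).mp (Finset.mem_coe.mp ha))
          _ ((hFmem b).mp (Finset.mem_coe.mp hb)) (fun h => hab (e.injective h)) with h | h
      · exact Or.inl ((char1 a b).mp h).1
      · exact Or.inr ((char1 b a).mp h).1
    have hGdecomp : ∀ g ∈ G, g = x' ∨ g = y' ∨ ∃ a ∈ F, g = e a := by
      intro g hg
      rcases htri g with h | h | ⟨a, rfl⟩
      · exact Or.inl h
      · exact Or.inr (Or.inl h)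
      · exact Or.inr (Or.inr ⟨a, (hFmem a).mpr hg, rfl⟩)
    have hnxy : ¬(x ∈ F ∧ y ∈ F) := by
      rintro ⟨hxF, hyF⟩
      rcases hcompat _ ((hFmem x).mp hxF) _ ((hFmem y).mp hyF)
          (fun h => hxyne (e.injective h)) with h | h
      · exact hxy ((char1 x y).mp h).1
      · exact ((char1 y x).mp h).2 ⟨rfl, rfl⟩
    by_cases hx'G : x' ∈ G <;> by_cases hy'G : y' ∈ G
    · -- x' ∈ G, y' ∈ G
      have hxF : x ∉ F := by
        intro h
        rcases hcompat _ ((hFmem x).mp h) _ hx'G (hex' x) with h2 | h2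
        · exact hxy ((char3 x).mp h2)
        · exact lt_irrefl x ((char2 x).mp h2)
      have hyF : y ∉ F := by
        intro h
        rcases hcompat _ ((hFmem y).mp h) _ hy'G (hey' y) with h2 | h2
        · exact lt_irrefl y ((char4 y).mp h2)
        · exact hxy ((char5 y).mp h2)
      have hcmp : ∀ a ∈ F, a < y ∨ x < a := by
        intro a ha
        rcases hcompat _ ((hFmem a).mp ha) _ hx'G (hex' a) with h2 | h2
        · have hay := (char3 a).mp h2
          rcases hcompat _ ((hFmem a).mp ha) _ hy'G (hey' a) with h3 | h3
          · exact Or.inl ((char4 a).mp h3)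
          · exact absurd (le_trans ((char5 a).mp h3) hay) hxy
        · exact Or.inr ((char2 a).mp h2)
      refine Or.inr ⟨F.image e, (link_S1 P hx1 hx2 hy1 hy2 hcov e x' hex' _).mpr
        ⟨F, ⟨hxF, hyF, hFOC, hcmp⟩, rfl⟩, Or.inr (Or.inr ?_)⟩
      ext g
      simp only [Finset.mem_insert]
      constructor
      · intro hg
        rcases hGdecomp g hg with h | h | ⟨a, ha, rfl⟩
        · exact Or.inl h
        · exact Or.inr (Or.inl h)
        · exact Or.inr (Or.inr (Finset.mem_image_of_mem _ ha))
      · rintro (rfl | rfl | h)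
        · exact hx'G
        · exact hy'G
        · obtain ⟨a, ha, rfl⟩ := Finset.mem_image.mp h
          exact (hFmem a).mp ha
    · -- x' ∈ G, y' ∉ G
      have hxF : x ∉ F := by
        intro h
        rcases hcompat _ ((hFmem x).mp h) _ hx'G (hex' x) with h2 | h2
        · exact hxy ((char3 x).mp h2)
        · exact lt_irrefl x ((char2 x).mp h2)
      have hcmp0 : ∀ a ∈ F, a ≤ y ∨ x < a := by
        intro a ha
        rcases hcompat _ ((hFmem a).mp ha) _ hx'G (hex' a) with h2 | h2
        · exact Or.inl ((char3 a).mp h2)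
        · exact Or.inr ((char2 a).mp h2)
      by_cases hyF : y ∈ F
      · -- face of type insert (e y) (insert x' _)
        have hF0 : linkCond P x y (F.erase y) := by
          refine ⟨fun h => hxF (Finset.mem_of_mem_erase h), Finset.notMem_erase _ _,
            orderComplex_mono hFOC (Finset.erase_subset _ _), ?_⟩
          intro a ha
          rcases hcmp0 a (Finset.mem_of_mem_erase ha) with h | h
          · exact Or.inl (lt_of_le_of_ne h (Finset.mem_erase.mp ha).1)
          · exact Or.inr h
        refine Or.inl ⟨mem_edgeSubdiv.mpr (Or.inr ⟨(F.erase y).image e,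
          (link_D0 P hx1 hx2 hy1 hy2 hcov e _).mpr ⟨F.erase y, hF0, rfl⟩,
          Or.inr (Or.inr ?_)⟩), ?_⟩
        · ext g
          simp only [Finset.mem_insert]
          constructor
          · intro hg
            rcases hGdecomp g hg with h | h | ⟨a, ha, rfl⟩
            · exact Or.inr (Or.inl h)
            · exact absurd (h ▸ hg) hy'G
            · by_cases hay : a = y
              · exact Or.inl (by rw [hay])
              · exact Or.inr (Or.inr (Finset.mem_image_of_mem _
                  (Finset.mem_erase.mpr ⟨hay, ha⟩)))
          · rintro (rfl | rfl | h)
            · exact (hFmem y).mp hyF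
            · exact hx'G
            · obtain ⟨a, ha, rfl⟩ := Finset.mem_image.mp h
              exact (hFmem a).mp (Finset.mem_of_mem_erase ha)
        · intro h
          exact hxF ((hFmem x).mpr (h (Finset.mem_insert_self _ _)))
      · -- face of type insert x' _
        have hF0 : linkCond P x y F := by
          refine ⟨hxF, hyF, hFOC, ?_⟩
          intro a ha
          rcases hcmp0 a ha with h | h
          · exact Or.inl (lt_of_le_of_ne h (fun he => hyF (he ▸ ha)))
          · exact Or.inr h
        refine Or.inl ⟨mem_edgeSubdiv.mpr (Or.inr ⟨F.image e,
          (link_D0 P hx1 hx2 hy1 hy2 hcov e _).mpr ⟨F, hF0, rfl⟩, Or.inl ?_⟩), ?_⟩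
        · ext g
          simp only [Finset.mem_insert]
          constructor
          · intro hg
            rcases hGdecomp g hg with h | h | ⟨a, ha, rfl⟩
            · exact Or.inl h
            · exact absurd (h ▸ hg) hy'G
            · exact Or.inr (Finset.mem_image_of_mem _ ha)
          · rintro (rfl | h)
            · exact hx'G
            · obtain ⟨a, ha, rfl⟩ := Finset.mem_image.mp h
              exact (hFmem a).mp ha
        · intro h
          exact hxF ((hFmem x).mpr (h (Finset.mem_insert_self _ _)))
    · -- x' ∉ G, y' ∈ G
      have hyF : y ∉ F := by
        intro h
        rcases hcompat _ ((hFmem y).mp h) _ hy'G (hey' y) with h2 | h2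
        · exact lt_irrefl y ((char4 y).mp h2)
        · exact hxy ((char5 y).mp h2)
      have hcmp0 : ∀ a ∈ F, a < y ∨ x ≤ a := by
        intro a ha
        rcases hcompat _ ((hFmem a).mp ha) _ hy'G (hey' a) with h2 | h2
        · exact Or.inl ((char4 a).mp h2)
        · exact Or.inr ((char5 a).mp h2)
      by_cases hxF : x ∈ F
      · -- face of type insert (e x) (insert y' _)
        have hF0 : linkCond P x y (F.erase x) := by
          refine ⟨Finset.notMem_erase _ _, fun h => hyF (Finset.mem_of_mem_erase h),
            orderComplex_mono hFOC (Finset.erase_subset _ _), ?_⟩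
          intro a ha
          rcases hcmp0 a (Finset.mem_of_mem_erase ha) with h | h
          · exact Or.inl h
          · exact Or.inr (lt_of_le_of_ne h (Ne.symm (Finset.mem_erase.mp ha).1))
        refine Or.inr ⟨(F.erase x).image e, (link_S1 P hx1 hx2 hy1 hy2 hcov e x' hex' _).mpr
          ⟨F.erase x, hF0, rfl⟩, Or.inr (Or.inl ?_)⟩
        ext g
        simp only [Finset.mem_insert]
        constructor
        · intro hg
          rcases hGdecomp g hg with h | h | ⟨a, ha, rfl⟩
          · exact absurd (h ▸ hg) hx'G
          · exact Or.inr (Or.inl h)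
          · by_cases hax : a = x
            · exact Or.inl (by rw [hax])
            · exact Or.inr (Or.inr (Finset.mem_image_of_mem _
                (Finset.mem_erase.mpr ⟨hax, ha⟩)))
        · rintro (rfl | rfl | h)
          · exact (hFmem x).mp hxF
          · exact hy'G
          · obtain ⟨a, ha, rfl⟩ := Finset.mem_image.mp h
            exact (hFmem a).mp (Finset.mem_of_mem_erase ha)
      · -- face of type insert y' _
        have hF0 : linkCond P x y F := by
          refine ⟨hxF, hyF, hFOC, ?_⟩
          intro a ha
          rcases hcmp0 a ha with h | h
          · exact Or.inl h
          · exact Or.inr (lt_of_le_of_ne h (fun he => hxF (he ▸ ha)))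
        refine Or.inr ⟨F.image e, (link_S1 P hx1 hx2 hy1 hy2 hcov e x' hex' _).mpr
          ⟨F, hF0, rfl⟩, Or.inl ?_⟩
        ext g
        simp only [Finset.mem_insert]
        constructor
        · intro hg
          rcases hGdecomp g hg with h | h | ⟨a, ha, rfl⟩
          · exact absurd (h ▸ hg) hx'G
          · exact Or.inl h
          · exact Or.inr (Finset.mem_image_of_mem _ ha)
        · rintro (rfl | h)
          · exact hy'G
          · obtain ⟨a, ha, rfl⟩ := Finset.mem_image.mp h
            exact (hFmem a).mp ha
    · -- x' ∉ G, y' ∉ G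
      have hGeq : G = F.image e := by
        ext g
        constructor
        · intro hg
          rcases hGdecomp g hg with h | h | ⟨a, ha, rfl⟩
          · exact absurd (h ▸ hg) hx'G
          · exact absurd (h ▸ hg) hy'G
          · exact Finset.mem_image_of_mem _ ha
        · intro hg
          obtain ⟨a, ha, rfl⟩ := Finset.mem_image.mp hg
          exact (hFmem a).mp ha
      refine Or.inl ⟨mem_edgeSubdiv.mpr (Or.inl ⟨Finset.mem_image.mpr ⟨F, hFOC, hGeq.symm⟩,
        ?_⟩), ?_⟩
      · intro h
        exact hnxy ⟨(hFmem x).mpr (h (Finset.mem_insert_self _ _)),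
          (hFmem y).mpr (h (Finset.mem_insert_of_mem (Finset.mem_singleton_self _)))⟩
      · intro h
        exact hx'G (h (Finset.mem_insert_of_mem (Finset.mem_singleton_self _)))
  · -- double subdivision ⊆ orderComplex Q
    rintro (⟨hS1, hnsub⟩ | ⟨L, hL, hshape⟩)
    · rcases mem_edgeSubdiv.mp hS1 with ⟨hD0, hnxy'⟩ | ⟨L, hL, hshape⟩
      · -- old face
        obtain ⟨F, hF, hFeq⟩ := Finset.mem_image.mp hD0
        subst hFeq
        rw [mem_orderComplex]
        have hnb : ¬(x ∈ F ∧ y ∈ F) := by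
          rintro ⟨h1, h2⟩
          exact hnxy' (Finset.insert_subset_iff.mpr ⟨Finset.mem_image_of_mem _ h1,
            Finset.singleton_subset_iff.mpr (Finset.mem_image_of_mem _ h2)⟩)
        have hbt := hnotbt (F.image e) (fun g hg => Or.inr (Or.inr (himgbt F hF g hg)))
        exact ⟨himchain F hF hnb, hbt.1, hbt.2⟩
      · -- face from the first subdivision
        obtain ⟨F, hF, rfl⟩ := (link_D0 P hx1 hx2 hy1 hy2 hcov e L).mp hL
        obtain ⟨hxF, hyF, hFOC, hcmp⟩ := hF
        have hch0 : IsChain (· ≤ ·) (↑(F.image e) : Set Q.carrier) :=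
          himchain F hFOC (fun h => hxF h.1)
        have hx'comp : ∀ g ∈ (↑(F.image e) : Set Q.carrier), x' ≠ g →
            x' ≤ g ∨ g ≤ x' := by
          intro g hg _
          obtain ⟨a, ha, rfl⟩ := Finset.mem_image.mp (Finset.mem_coe.mp hg)
          rcases hcmp a ha with h | h
          · exact Or.inr ((char3 a).mpr h.le)
          · exact Or.inl ((char2 a).mpr h)
        rcases hshape with rfl | rfl | rfl
        · -- insert x' (F.image e)
          rw [mem_orderComplex, Finset.coe_insert]
          have hbt := hnotbt (insert x' (F.image e)) (by
            intro g hg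
            rcases Finset.mem_insert.mp hg with rfl | hg'
            · exact Or.inl rfl
            · exact Or.inr (Or.inr (himgbt F hFOC g hg')))
          exact ⟨hch0.insert hx'comp, hbt.1, hbt.2⟩
        · -- insert (e x) (insert x' (F.image e)) : excluded
          exact absurd (Finset.insert_subset_iff.mpr ⟨Finset.mem_insert_self _ _,
            Finset.singleton_subset_iff.mpr (Finset.mem_insert_of_mem
              (Finset.mem_insert_self _ _))⟩) hnsub
        · -- insert (e y) (insert x' (F.image e))
          rw [mem_orderComplex, Finset.coe_insert, Finset.coe_insert]
          have hbt := hnotbt (insert (e y) (insert x' (F.image e))) (by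
            intro g hg
            rcases Finset.mem_insert.mp hg with rfl | hg'
            · exact Or.inr (Or.inr ⟨y, hy1, hy2, rfl⟩)
            · rcases Finset.mem_insert.mp hg' with rfl | hg''
              · exact Or.inl rfl
              · exact Or.inr (Or.inr (himgbt F hFOC g hg'')))
          refine ⟨(hch0.insert hx'comp).insert ?_, hbt.1, hbt.2⟩
          intro g hg _
          rcases hg with rfl | hg
          · exact Or.inl ((char3 y).mpr le_rfl)
          · obtain ⟨a, ha, rfl⟩ := Finset.mem_image.mp (Finset.mem_coe.mp hg)
            rcases hcmp a ha with h | h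
            · exact Or.inr ((char1 a y).mpr ⟨h.le, fun hp => hxyne hp.2.symm⟩)
            · exact Or.inl ((char1 y a).mpr ⟨(hyx.trans h).le, fun hp => h.ne' hp.2⟩)
    · -- faces from the second subdivision
      obtain ⟨F, hF, rfl⟩ := (link_S1 P hx1 hx2 hy1 hy2 hcov e x' hex' L).mp hL
      obtain ⟨hxF, hyF, hFOC, hcmp⟩ := hF
      have hch0 : IsChain (· ≤ ·) (↑(F.image e) : Set Q.carrier) :=
        himchain F hFOC (fun h => hxF h.1)
      have hy'comp : ∀ g ∈ (↑(F.image e) : Set Q.carrier), y' ≠ g →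
          y' ≤ g ∨ g ≤ y' := by
        intro g hg _
        obtain ⟨a, ha, rfl⟩ := Finset.mem_image.mp (Finset.mem_coe.mp hg)
        rcases hcmp a ha with h | h
        · exact Or.inr ((char4 a).mpr h)
        · exact Or.inl ((char5 a).mpr h.le)
      rcases hshape with rfl | rfl | rfl
      · -- insert y' (F.image e)
        rw [mem_orderComplex, Finset.coe_insert]
        have hbt := hnotbt (insert y' (F.image e)) (by
          intro g hg
          rcases Finset.mem_insert.mp hg with rfl | hg'
          · exact Or.inr (Or.inl rfl)
          · exact Or.inr (Or.inr (himgbt F hFOC g hg')))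
        exact ⟨hch0.insert hy'comp, hbt.1, hbt.2⟩
      · -- insert (e x) (insert y' (F.image e))
        rw [mem_orderComplex, Finset.coe_insert, Finset.coe_insert]
        have hbt := hnotbt (insert (e x) (insert y' (F.image e))) (by
          intro g hg
          rcases Finset.mem_insert.mp hg with rfl | hg'
          · exact Or.inr (Or.inr ⟨x, hx1, hx2, rfl⟩)
          · rcases Finset.mem_insert.mp hg' with rfl | hg''
            · exact Or.inr (Or.inl rfl)
            · exact Or.inr (Or.inr (himgbt F hFOC g hg'')))
        refine ⟨(hch0.insert hy'comp).insert ?_, hbt.1, hbt.2⟩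
        intro g hg _
        rcases hg with rfl | hg
        · exact Or.inr ((char5 x).mpr le_rfl)
        · obtain ⟨a, ha, rfl⟩ := Finset.mem_image.mp (Finset.mem_coe.mp hg)
          rcases hcmp a ha with h | h
          · exact Or.inr ((char1 a x).mpr ⟨(h.trans hyx).le, fun hp => h.ne hp.1⟩)
          · exact Or.inl ((char1 x a).mpr ⟨h.le, fun hp => hxyne hp.1⟩)
      · -- insert x' (insert y' (F.image e))
        rw [mem_orderComplex, Finset.coe_insert, Finset.coe_insert]
        have hbt := hnotbt (insert x' (insert y' (F.image e))) (by
          intro g hg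
          rcases Finset.mem_insert.mp hg with rfl | hg'
          · exact Or.inl rfl
          · rcases Finset.mem_insert.mp hg' with rfl | hg''
            · exact Or.inr (Or.inl rfl)
            · exact Or.inr (Or.inr (himgbt F hFOC g hg'')))
        refine ⟨(hch0.insert hy'comp).insert ?_, hbt.1, hbt.2⟩
        intro g hg _
        rcases hg with rfl | hg
        · exact Or.inr char6
        · obtain ⟨a, ha, rfl⟩ := Finset.mem_image.mp (Finset.mem_coe.mp hg)
          rcases hcmp a ha with h | h
          · exact Or.inr ((char3 a).mpr h.le)
          · exact Or.inl ((char2 a).mpr h)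
end
end

section
/- If P is a Gorenstein* poset of rank 5, then α13(P) ≤ α1(P) · α3(P). -/
open scoped Classical

noncomputable section

/-! ### Finite abstract simplicial complexes and simplicial (reduced) homology -/

variable {V : Type} [Fintype V] [DecidableEq V]

/-! Reading off the coefficients of `baaa`, `aaab` and `baab` in `Ψ_P = Φ_P(a + b, ab + ba)` gives
`h_{1} = 1 + α₁`, `h_{4} = 1 + α₃` and `h_{14} = 1 + α₁ + α₃ + α₁₃`, that is `f_{1} = α₁ + 2`,
`f_{4} = α₃ + 2` and `α₁₃ = f_{14} - 2α₁ - 2α₃ - 4`. A chain with ranks `{1, 4}` is determined by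
its two elements, so `f_{14} ≤ f_{1} f_{4} = (α₁ + 2)(α₃ + 2)`, which is the claim. -/

lemma Finset.sum_powerset_singleton {α M : Type*} [DecidableEq α] [AddCommMonoid M] (a : α)
    (f : Finset α → M) : ∑ t ∈ ({a} : Finset α).powerset, f t = f ∅ + f {a} := by
  rw [← Finset.insert_empty, Finset.sum_powerset_insert (Finset.notMem_empty a)]
  simp

namespace FreeAlgebra

variable {R X : Type*} [CommSemiring R]

lemma basisFreeMonoid_apply (m : FreeMonoid X) :
    basisFreeMonoid R X m = FreeMonoid.lift (ι R) m := by
  simp [basisFreeMonoid, equivMonoidAlgebraFreeMonoid]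

lemma coord_lift_ι (w m : FreeMonoid X) [Decidable (m = w)] :
    (basisFreeMonoid R X).coord w (FreeMonoid.lift (ι R) m) = if m = w then 1 else 0 := by
  rw [← basisFreeMonoid_apply, Module.Basis.coord_apply, Module.Basis.repr_self,
    Finsupp.single_apply]

lemma ι_mul_ι (x y : X) :
    ι R x * ι R y = FreeMonoid.lift (ι R) (FreeMonoid.of x * FreeMonoid.of y) := by
  rw [map_mul, FreeMonoid.lift_eval_of, FreeMonoid.lift_eval_of]

lemma ι_mul_lift_ι (x : X) (m : FreeMonoid X) :
    ι R x * FreeMonoid.lift (ι R) m = FreeMonoid.lift (ι R) (FreeMonoid.of x * m) := by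
  rw [map_mul, FreeMonoid.lift_eval_of]

end FreeAlgebra

open FreeAlgebra

def uMonomial (n : ℕ) (S : Finset ℕ) : FreeMonoid Bool :=
  FreeMonoid.ofList ((List.range n).map fun i => decide (i + 1 ∈ S))

lemma uWord_eq_lift_uMonomial (n : ℕ) (S : Finset ℕ) :
    uWord n S = FreeMonoid.lift (ι ℤ) (uMonomial n S) := by
  rw [uWord, uMonomial, FreeMonoid.lift_ofList, List.map_map]
  congr 1
  refine List.map_congr_left fun i _ => ?_
  by_cases h : i + 1 ∈ S <;> simp [h]

lemma uMonomial_injOn (n : ℕ) : Set.InjOn (uMonomial n) (Finset.Icc 1 n).powerset := by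
  intro S hS T hT hST
  rw [uMonomial, uMonomial, FreeMonoid.ofList.injective.eq_iff, List.map_inj_left] at hST
  have hmem : ∀ x ∈ Finset.Icc 1 n, x ∈ S ↔ x ∈ T := by
    intro x hx
    obtain ⟨hx1, hxn⟩ := Finset.mem_Icc.1 hx
    simpa [Nat.sub_add_cancel hx1] using hST (x - 1) (List.mem_range.2 (by omega))
  ext x
  exact ⟨fun h => (hmem x (Finset.mem_powerset.1 hS h)).1 h,
    fun h => (hmem x (Finset.mem_powerset.1 hT h)).2 h⟩

lemma coord_PsiAB (P : FinGradedPoset) {S : Finset ℕ} (hS : S ⊆ Finset.Icc 1 (P.rank - 1)) :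
    (basisFreeMonoid ℤ Bool).coord (uMonomial (P.rank - 1) S) (PsiAB P) = flagH P S := by
  rw [PsiAB, map_sum, Finset.sum_eq_single S]
  · rw [map_zsmul, uWord_eq_lift_uMonomial, coord_lift_ι, if_pos rfl, smul_eq_mul, mul_one]
  · intro T hT hTS
    rw [map_zsmul, uWord_eq_lift_uMonomial, coord_lift_ι,
      if_neg fun h => hTS (uMonomial_injOn _ hT (Finset.mem_powerset.2 hS) h), smul_zero]
  · exact fun h => absurd (Finset.mem_powerset.2 hS) h

lemma IsCdIndex.flagH_eq {P : FinGradedPoset} {Φ : FreeAlgebra ℤ Bool} (hΦ : IsCdIndex P Φ)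
    {S : Finset ℕ} (hS : S ⊆ Finset.Icc 1 (P.rank - 1)) :
    flagH P S = (basisFreeMonoid ℤ Bool).coord (uMonomial (P.rank - 1) S) (cdToAB Φ) := by
  rw [hΦ, coord_PsiAB P hS]

-- Each `c` contributes either letter, each `d = ab + ba` two distinct consecutive letters.
lemma coord_cdToAB_cdPoly5 (a1 a2 a3 a13 : ℕ) (t₁ t₂ t₃ t₄ : Bool) :
    (basisFreeMonoid ℤ Bool).coord (FreeMonoid.ofList [t₁, t₂, t₃, t₄])
        (cdToAB (cdPoly5 a1 a2 a3 a13)) =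
      1 + (if t₁ ≠ t₂ then (a1 : ℤ) else 0) + (if t₂ ≠ t₃ then (a2 : ℤ) else 0) +
        (if t₃ ≠ t₄ then (a3 : ℤ) else 0) + (if t₁ ≠ t₂ ∧ t₃ ≠ t₄ then (a13 : ℤ) else 0) := by
  simp only [cdPoly5, Cv, Dv, cdToAB, map_add, map_zsmul, map_mul, map_pow, lift_ι_apply,
    if_true, Bool.false_eq_true, if_false]
  simp only [pow_succ, pow_zero, one_mul, mul_add, add_mul, mul_assoc]
  simp only [ι_mul_ι, ι_mul_lift_ι]
  simp only [map_add, smul_eq_mul, coord_lift_ι]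
  simp only [← FreeMonoid.toList.injective.eq_iff, FreeMonoid.toList_mul, FreeMonoid.toList_of,
    FreeMonoid.toList_ofList]
  cases t₁ <;> cases t₂ <;> cases t₃ <;> cases t₄ <;> norm_num

lemma mem_orderComplex_of_subset {P : FinGradedPoset} {F G : Finset P.carrier}
    (hF : F ∈ orderComplex P) (hGF : G ⊆ F) : G ∈ orderComplex P := by
  simp only [orderComplex, Finset.mem_filter, Finset.mem_univ, true_and] at hF ⊢
  exact ⟨hF.1.mono (by exact_mod_cast hGF), fun h => hF.2.1 (hGF h), fun h => hF.2.2 (hGF h)⟩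

lemma flagF_empty (P : FinGradedPoset) : flagF P ∅ = 1 := by
  have h : (orderComplex P).filter (fun F => F.image P.rk = ∅) = {∅} := by
    ext F
    simp only [Finset.mem_filter, Finset.image_eq_empty, Finset.mem_singleton,
      and_iff_right_iff_imp]
    rintro rfl
    simp [orderComplex]
  rw [flagF, h, Finset.card_singleton]

lemma flagH_singleton (P : FinGradedPoset) (m : ℕ) : flagH P {m} = flagF P {m} - 1 := by
  rw [flagH, Finset.sum_powerset_singleton]
  simp [flagF_empty, sub_eq_neg_add]

lemma flagH_pair (P : FinGradedPoset) {m n : ℕ} (hmn : m ≠ n) :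
    flagH P {m, n} = flagF P {m, n} - flagF P {m} - flagF P {n} + 1 := by
  rw [flagH, Finset.sum_powerset_insert (by simpa using hmn), Finset.sum_powerset_singleton,
    Finset.sum_powerset_singleton]
  simp only [Finset.card_pair hmn, Finset.card_singleton, Finset.card_empty,
    Finset.insert_empty, flagF_empty, Nat.cast_one]
  ring

lemma flagF_union_le (P : FinGradedPoset) (S T : Finset ℕ) :
    flagF P (S ∪ T) ≤ flagF P S * flagF P T := by
  rw [flagF, flagF, flagF, ← Finset.card_product]
  refine Finset.card_le_card_of_injOn
    (fun F => (F.filter (P.rk · ∈ S), F.filter (P.rk · ∈ T))) ?_ ?_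
  · intro F hF
    simp only [Finset.coe_filter, Set.mem_ofPred_eq] at hF
    have hrk : ∀ U : Finset ℕ, (F.filter (P.rk · ∈ U)).image P.rk = (S ∪ T).filter (· ∈ U) := by
      intro U
      rw [← hF.2, Finset.filter_image]
    simp only [Finset.coe_product, Finset.coe_filter, Set.mem_prod, Set.mem_ofPred_eq, hrk]
    refine ⟨⟨mem_orderComplex_of_subset hF.1 (Finset.filter_subset _ _), ?_⟩,
      mem_orderComplex_of_subset hF.1 (Finset.filter_subset _ _), ?_⟩ <;> ext <;> simp
  · intro F hF G hG hFG
    simp only [Finset.coe_filter, Set.mem_ofPred_eq] at hF hG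
    have hsplit : ∀ H : Finset P.carrier, H.image P.rk = S ∪ T →
        H.filter (P.rk · ∈ S) ∪ H.filter (P.rk · ∈ T) = H := by
      intro H hH
      rw [← Finset.filter_or, Finset.filter_true_of_mem]
      intro x hx
      simpa [← Finset.mem_union, ← hH] using Finset.mem_image_of_mem P.rk hx
    simp only [Prod.mk.injEq] at hFG
    rw [← hsplit F hF.2, ← hsplit G hG.2, hFG.1, hFG.2]

theorem stmt_9_general (P : FinGradedPoset) (hr : P.rank = 5)
    (α1 α2 α3 α13 : ℕ) (hΦ : IsCdIndex P (cdPoly5 α1 α2 α3 α13)) :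
    α13 ≤ α1 * α3 := by
  have hcoeff : ∀ S ⊆ Finset.Icc 1 4, flagH P S = (basisFreeMonoid ℤ Bool).coord
      (FreeMonoid.ofList [1 ∈ S, 2 ∈ S, 3 ∈ S, 4 ∈ S]) (cdToAB (cdPoly5 α1 α2 α3 α13)) := by
    intro S hS
    rw [hΦ.flagH_eq (by rwa [hr]), hr]
    simp [uMonomial, List.range_succ]
  have h1 : flagH P {1} = 1 + α1 := by
    rw [hcoeff {1} (by decide), coord_cdToAB_cdPoly5]; simp
  have h4 : flagH P {4} = 1 + α3 := by
    rw [hcoeff {4} (by decide), coord_cdToAB_cdPoly5]; simp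
  have h14 : flagH P {1, 4} = 1 + α1 + α3 + α13 := by
    rw [hcoeff {1, 4} (by decide), coord_cdToAB_cdPoly5]; simp
  rw [flagH_singleton] at h1 h4
  rw [flagH_pair P (by norm_num)] at h14
  have hf : (flagF P {1, 4} : ℤ) ≤ flagF P {1} * flagF P {4} := by
    exact_mod_cast Finset.insert_eq 1 {4} ▸ flagF_union_le P {1} {4}
  zify
  nlinarith

/-- for a Gorenstein* poset of rank 5, `α13 ≤ α1 · α3`. -/
theorem stmt_9 (P : FinGradedPoset) (hP : IsGorenstein P) (hr : P.rank = 5)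
    (α1 α2 α3 α13 : ℕ) (hΦ : IsCdIndex P (cdPoly5 α1 α2 α3 α13)) :
    α13 ≤ α1 * α3 :=
  stmt_9_general P hr α1 α2 α3 α13 hΦ
end
end
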